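/- arXiv:1908.10704 — 2 statements merged into one kernel-verified Lean document; each statement's English description precedes it below -/
import Mathlib

section
/- Let n be a positive integer and let H ∈ GL(2n,ℂ) be a Hermitian matrix such that ᵀH·H = −I_{2n}. Then there exists M ∈ O(2n,ℂ) such that M*·H·M = i·J_{2n}. -/
open Matrix

noncomputable section

/-- The standard symplectic matrix `J_{2n} = [[0, Iₙ],[−Iₙ, 0]]`. -/
def Jmat (n : ℕ) : Matrix (Fin n ⊕ Fin n) (Fin n ⊕ Fin n) ℂ :=
  Matrix.fromBlocks 0 1 (-1) 0

/-- `M ∈ O(2n,ℂ)`, i.e. `ᵀM M = I_{2n}`. -/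
def IsOrthoC {n : ℕ} (M : Matrix (Fin n ⊕ Fin n) (Fin n ⊕ Fin n) ℂ) : Prop :=
  Mᵀ * M = 1

namespace Stmt10Aux

variable {ι : Type*} [Fintype ι] [DecidableEq ι]

/-- Entrywise complex conjugation of a matrix. -/
def Cj (A : Matrix ι ι ℂ) : Matrix ι ι ℂ := A.map (starRingEnd ℂ)

lemma Cj_apply (A : Matrix ι ι ℂ) (i j : ι) : Cj A i j = (starRingEnd ℂ) (A i j) := rfl

lemma Cj_mul (A B : Matrix ι ι ℂ) : Cj (A * B) = Cj A * Cj B :=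
  Matrix.map_mul

lemma Cj_Cj (A : Matrix ι ι ℂ) : Cj (Cj A) = A := by
  ext i j; simp [Cj]

lemma Cj_one : Cj (1 : Matrix ι ι ℂ) = 1 := by
  ext i j
  simp [Cj, Matrix.one_apply, apply_ite (starRingEnd ℂ)]

lemma Cj_neg (A : Matrix ι ι ℂ) : Cj (-A) = -(Cj A) := by
  ext i j; simp [Cj]

lemma Cj_conjTranspose (A : Matrix ι ι ℂ) : Cj (Aᴴ) = Aᵀ := by
  ext i j; simp [Cj]

lemma conjTranspose_Cj (A : Matrix ι ι ℂ) : (Cj A)ᴴ = Aᵀ := by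
  ext i j; simp [Cj]

lemma Cj_diagonal (f : ι → ℝ) :
    Cj (Matrix.diagonal (fun j => (f j : ℂ))) = Matrix.diagonal (fun j => (f j : ℂ)) := by
  ext i j
  by_cases h : i = j <;> simp [Cj, Matrix.diagonal, h]

lemma sumT (X Y : Matrix ι ι ℂ) (j k : ι) :
    ∑ r, X r j * Y r k = (Xᵀ * Y) j k := by
  simp [Matrix.mul_apply]

lemma sum_expand4 (f g p q : ι → ℂ) (c1 c2 c3 c4 : ℂ) :
    ∑ r, (c1 * f r + c2 * g r) * (c3 * p r + c4 * q r)
      = c1 * c3 * ∑ r, f r * p r + c1 * c4 * ∑ r, f r * q r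
        + c2 * c3 * ∑ r, g r * p r + c2 * c4 * ∑ r, g r * q r := by
  rw [Finset.mul_sum, Finset.mul_sum, Finset.mul_sum, Finset.mul_sum,
    ← Finset.sum_add_distrib, ← Finset.sum_add_distrib, ← Finset.sum_add_distrib]
  exact Finset.sum_congr rfl fun r _ => by ring

lemma coef_ab (L s q : ℝ) (hs : 0 < s) (hq : 0 < q) (hss : s * s = L) (hqq : q * q = 2) :
    (s * q)⁻¹ * (s / q) = 1 / 2 := by
  field_simp
  nlinarith [hs, hq]

lemma coef_a2 (L s q : ℝ) (hs : 0 < s) (hq : 0 < q) (hss : s * s = L) (hqq : q * q = 2) :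
    (s * q)⁻¹ * (s * q)⁻¹ * L = 1 / 2 := by
  field_simp
  nlinarith [hs, hq]

lemma coef_b2 (L s q : ℝ) (hs : 0 < s) (hq : 0 < q) (hss : s * s = L) (hqq : q * q = 2) :
    (s / q) * (s / q) * L⁻¹ = 1 / 2 := by
  have hL : 0 < L := by nlinarith
  field_simp
  nlinarith [hs, hq]

end Stmt10Aux

open Stmt10Aux in
theorem stmt10 {n : ℕ} (hn : 0 < n)
    (H : Matrix (Fin n ⊕ Fin n) (Fin n ⊕ Fin n) ℂ) (hunit : IsUnit H)
    (hherm : H.IsHermitian) (hHH : Hᵀ * H = -1) :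
    ∃ M : Matrix (Fin n ⊕ Fin n) (Fin n ⊕ Fin n) ℂ, IsOrthoC M ∧
      Mᴴ * H * M = Complex.I • Jmat n := by
  classical
  set U : Matrix (Fin n ⊕ Fin n) (Fin n ⊕ Fin n) ℂ := (hherm.eigenvectorUnitary : Matrix (Fin n ⊕ Fin n) (Fin n ⊕ Fin n) ℂ) with hUdef
  set d : (Fin n ⊕ Fin n) → ℝ := hherm.eigenvalues with hddef
  set Dm : Matrix (Fin n ⊕ Fin n) (Fin n ⊕ Fin n) ℂ := Matrix.diagonal (fun j => (d j : ℂ)) with hDmdef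
  -- unitarity
  have hUprop := hherm.eigenvectorUnitary.prop
  rw [Unitary.mem_iff] at hUprop
  have hU1 : Uᴴ * U = 1 := by
    rw [← Matrix.star_eq_conjTranspose]; exact hUprop.1
  have hU2 : U * Uᴴ = 1 := by
    rw [← Matrix.star_eq_conjTranspose]; exact hUprop.2
  -- spectral theorem
  have hspec : H = U * Dm * Uᴴ := by
    have := hherm.spectral_theorem
    rw [Unitary.conjStarAlgAut_apply] at this
    rw [← Matrix.star_eq_conjTranspose]
    exact this
  -- eigenvalues are nonzero
  have hd0 : ∀ j, d j ≠ 0 := by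
    intro j hj
    have hdet : H.det = ∏ i, (d i : ℂ) := hherm.det_eq_prod_eigenvalues
    have : IsUnit H.det := (Matrix.isUnit_iff_isUnit_det H).mp hunit
    rw [hdet] at this
    have hz : (∏ i, (d i : ℂ)) = 0 := by
      apply Finset.prod_eq_zero (Finset.mem_univ j)
      rw [hj]; norm_num
    rw [hz] at this
    exact this.ne_zero rfl
  have hHU : H * U = U * Dm := by
    rw [hspec, Matrix.mul_assoc, Matrix.mul_assoc, hU1, Matrix.mul_one]
  have hUH : Uᴴ * H = Dm * Uᴴ := by
    rw [hspec, ← Matrix.mul_assoc, ← Matrix.mul_assoc, hU1, Matrix.one_mul]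
  -- transpose of H is its conjugate
  have hHT : Hᵀ = Cj H := by
    have h1 : Hᴴ = H := hherm
    ext i j
    have := congrFun (congrFun h1 j) i
    simp only [Matrix.conjTranspose_apply] at this
    simp only [Cj_apply, Matrix.transpose_apply, ← this]
    simp
  have hcHH : Cj H * H = -1 := by rw [← hHT]; exact hHH
  have hHcH : H * Cj H = -1 := by
    have := congrArg Cj hcHH
    rw [Cj_mul, Cj_Cj, Cj_neg, Cj_one] at this
    exact this
  -- inverse diagonal
  set Dinv : Matrix (Fin n ⊕ Fin n) (Fin n ⊕ Fin n) ℂ := Matrix.diagonal (fun j => ((d j : ℂ))⁻¹) with hDinvdef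
  have hDD : Dm * Dinv = 1 := by
    rw [hDmdef, hDinvdef, Matrix.diagonal_mul_diagonal]
    ext i j
    by_cases h : i = j <;>
      simp [Matrix.diagonal, Matrix.one_apply, h,
        mul_inv_cancel₀ (Complex.ofReal_ne_zero.mpr (hd0 j))]
  -- conjugate of U
  set Ub : Matrix (Fin n ⊕ Fin n) (Fin n ⊕ Fin n) ℂ := Cj U with hUbdef
  have hcHU : Cj H * U = -(U * Dinv) := by
    have h1 : Cj H * (H * U) = -U := by
      rw [← Matrix.mul_assoc, hcHH]; simp
    rw [hHU, ← Matrix.mul_assoc] at h1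
    have h2 := congrArg (fun X => X * Dinv) h1
    simp only [Matrix.mul_assoc, Matrix.neg_mul] at h2
    rw [hDD, Matrix.mul_one] at h2
    exact h2
  have hHUb : H * Ub = -(Ub * Dinv) := by
    have := congrArg Cj hcHU
    rw [Cj_mul, Cj_Cj, Cj_neg, Cj_mul] at this
    rw [hUbdef, this, hDinvdef]
    congr 2
    ext i j
    by_cases h : i = j <;> simp [Cj, Matrix.diagonal, h]
  -- more unitarity
  have hU3 : Uᵀ * Ub = 1 := by
    have := congrArg Cj hU1
    rw [Cj_mul, Cj_conjTranspose, Cj_one] at this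
    exact this
  have hU4 : Ub * Uᵀ = 1 := by
    have := congrArg Cj hU2
    rw [Cj_mul, Cj_conjTranspose, Cj_one] at this
    exact this
  -- the pairing matrix V
  set V : Matrix (Fin n ⊕ Fin n) (Fin n ⊕ Fin n) ℂ := Uᴴ * Ub with hVdef
  have hDV : Dm * V = -(V * Dinv) := by
    rw [hVdef, ← Matrix.mul_assoc, ← hUH, Matrix.mul_assoc, hHUb, Matrix.mul_neg,
      ← Matrix.mul_assoc]
  have hVzero : ∀ j k, ((d j : ℂ) + ((d k : ℂ))⁻¹) ≠ 0 → V j k = 0 := by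
    intro j k hne
    have h := congrFun (congrFun hDV j) k
    simp only [hDmdef, hDinvdef, Matrix.diagonal_mul, Matrix.mul_diagonal,
      Matrix.neg_apply] at h
    have h2 : V j k * ((d j : ℂ) + ((d k : ℂ))⁻¹) = 0 := by linear_combination h
    rcases mul_eq_zero.mp h2 with h3 | h3
    · exact h3
    · exact absurd h3 hne
  have hVP : ∀ j k, 0 < d j → 0 < d k → V j k = 0 := by
    intro j k hj hk
    apply hVzero
    have hpos : (0:ℝ) < d j + (d k)⁻¹ := by positivity
    have : ((d j : ℂ) + ((d k : ℂ))⁻¹) = ((d j + (d k)⁻¹ : ℝ) : ℂ) := by push_cast; ring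
    rw [this]
    exact Complex.ofReal_ne_zero.mpr hpos.ne'
  have hVN : ∀ j k, d j < 0 → d k < 0 → V j k = 0 := by
    intro j k hj hk
    apply hVzero
    have hneg : d j + (d k)⁻¹ < 0 := add_neg hj (inv_neg''.mpr hk)
    have : ((d j : ℂ) + ((d k : ℂ))⁻¹) = ((d j + (d k)⁻¹ : ℝ) : ℂ) := by push_cast; ring
    rw [this]
    exact Complex.ofReal_ne_zero.mpr hneg.ne
  -- V is unitary
  have hVVh : V * Vᴴ = 1 := by
    rw [hVdef, Matrix.conjTranspose_mul, conjTranspose_Cj, Matrix.conjTranspose_conjTranspose,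
      Matrix.mul_assoc, ← Matrix.mul_assoc Ub, hU4, Matrix.one_mul, hU1]
  have hVhV : Vᴴ * V = 1 := by
    rw [hVdef, Matrix.conjTranspose_mul, conjTranspose_Cj, Matrix.conjTranspose_conjTranspose,
      Matrix.mul_assoc, ← Matrix.mul_assoc U, hU2, Matrix.one_mul, hU3]
  -- counting positive eigenvalues
  set P : Finset (Fin n ⊕ Fin n) := Finset.univ.filter (fun j => 0 < d j) with hPdef
  set N : Finset (Fin n ⊕ Fin n) := Finset.univ.filter (fun j => ¬ 0 < d j) with hNdef
  have hNneg : ∀ j ∈ N, d j < 0 := by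
    intro j hj
    rw [hNdef, Finset.mem_filter] at hj
    exact (le_of_not_gt hj.2).lt_of_ne (hd0 j)
  have hPpos : ∀ j ∈ P, 0 < d j := by
    intro j hj
    rw [hPdef, Finset.mem_filter] at hj
    exact hj.2
  have rowsum : ∀ j, ∑ k, Complex.normSq (V j k) = 1 := by
    intro j
    have h : (V * Vᴴ) j j = (1 : Matrix (Fin n ⊕ Fin n) (Fin n ⊕ Fin n) ℂ) j j := by rw [hVVh]
    rw [Matrix.mul_apply, Matrix.one_apply_eq] at h
    have h2 : ∑ k, ((Complex.normSq (V j k) : ℝ) : ℂ) = 1 := by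
      rw [← h]
      exact Finset.sum_congr rfl fun k _ => by
        rw [Matrix.conjTranspose_apply, ← Complex.mul_conj]
        rfl
    have h3 : (((∑ k, Complex.normSq (V j k)) : ℝ) : ℂ) = ((1 : ℝ) : ℂ) := by
      push_cast
      rw [h2]
    exact_mod_cast h3
  have colsum : ∀ k, ∑ j, Complex.normSq (V j k) = 1 := by
    intro k
    have h : (Vᴴ * V) k k = (1 : Matrix (Fin n ⊕ Fin n) (Fin n ⊕ Fin n) ℂ) k k := by rw [hVhV]
    rw [Matrix.mul_apply, Matrix.one_apply_eq] at h
    have h2 : ∑ j, ((Complex.normSq (V j k) : ℝ) : ℂ) = 1 := by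
      rw [← h]
      exact Finset.sum_congr rfl fun j _ => by
        rw [Matrix.conjTranspose_apply, mul_comm, ← Complex.mul_conj]
        rfl
    have h3 : (((∑ j, Complex.normSq (V j k)) : ℝ) : ℂ) = ((1 : ℝ) : ℂ) := by
      push_cast
      rw [h2]
    exact_mod_cast h3
  have hProw : ∀ j ∈ P, ∑ k ∈ N, Complex.normSq (V j k) = 1 := by
    intro j hj
    have hsplit := Finset.sum_filter_add_sum_filter_not Finset.univ
      (fun k => 0 < d k) (fun k => Complex.normSq (V j k))
    rw [← hPdef, ← hNdef, rowsum j] at hsplit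
    have hP0 : ∑ k ∈ P, Complex.normSq (V j k) = 0 :=
      Finset.sum_eq_zero fun k hk => by rw [hVP j k (hPpos j hj) (hPpos k hk)]; simp
    rw [hP0, zero_add] at hsplit
    exact hsplit
  have hNcol : ∀ k ∈ N, ∑ j ∈ P, Complex.normSq (V j k) = 1 := by
    intro k hk
    have hsplit := Finset.sum_filter_add_sum_filter_not Finset.univ
      (fun j => 0 < d j) (fun j => Complex.normSq (V j k))
    rw [← hPdef, ← hNdef, colsum k] at hsplit
    have hN0 : ∑ j ∈ N, Complex.normSq (V j k) = 0 :=
      Finset.sum_eq_zero fun j hj => by rw [hVN j k (hNneg j hj) (hNneg k hk)]; simp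
    rw [hN0, add_zero] at hsplit
    exact hsplit
  have hcard_eq : P.card = N.card := by
    have hreal : (P.card : ℝ) = (N.card : ℝ) := by
      calc (P.card : ℝ) = ∑ _j ∈ P, (1 : ℝ) := by simp
        _ = ∑ j ∈ P, ∑ k ∈ N, Complex.normSq (V j k) :=
            Finset.sum_congr rfl fun j hj => (hProw j hj).symm
        _ = ∑ k ∈ N, ∑ j ∈ P, Complex.normSq (V j k) := Finset.sum_comm
        _ = ∑ _k ∈ N, (1 : ℝ) := Finset.sum_congr rfl fun k hk => hNcol k hk
        _ = (N.card : ℝ) := by simp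
    exact_mod_cast hreal
  have hcard_sum : P.card + N.card = n + n := by
    have := Finset.card_filter_add_card_filter_not
      (s := Finset.univ (α := (Fin n ⊕ Fin n))) (p := fun j => 0 < d j)
    rw [← hPdef, ← hNdef] at this
    simpa using this
  have hPcard : P.card = n := by omega
  -- the selection of positive eigenvalues
  set σ : Fin n → (Fin n ⊕ Fin n) := fun k => ((Finset.equivFinOfCardEq hPcard).symm k : (Fin n ⊕ Fin n)) with hσdef
  have hσP : ∀ k, σ k ∈ P := fun k => ((Finset.equivFinOfCardEq hPcard).symm k).2
  have hσpos : ∀ k, 0 < d (σ k) := fun k => hPpos _ (hσP k)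
  have hσinj : Function.Injective σ := by
    intro a b hab
    have := Subtype.ext hab (p := fun x => x ∈ P)
    exact (Finset.equivFinOfCardEq hPcard).symm.injective this
  -- coefficients
  set lam : Fin n → ℝ := fun k => d (σ k) with hlamdef
  set al : Fin n → ℝ := fun k => (Real.sqrt (lam k) * Real.sqrt 2)⁻¹ with haldef
  set be : Fin n → ℝ := fun k => Real.sqrt (lam k) / Real.sqrt 2 with hbedef
  have hsq2 : Real.sqrt 2 * Real.sqrt 2 = 2 := Real.mul_self_sqrt (by norm_num)
  have hsq2pos : (0:ℝ) < Real.sqrt 2 := by positivity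
  have hspos : ∀ k, 0 < Real.sqrt (lam k) := fun k => Real.sqrt_pos.mpr (hσpos k)
  have hssq : ∀ k, Real.sqrt (lam k) * Real.sqrt (lam k) = lam k :=
    fun k => Real.mul_self_sqrt (hσpos k).le
  have hab2 : ∀ k, al k * be k = 1 / 2 := fun k =>
    coef_ab (lam k) _ _ (hspos k) hsq2pos (hssq k) hsq2
  have ha2 : ∀ k, al k * al k * lam k = 1 / 2 := fun k =>
    coef_a2 (lam k) _ _ (hspos k) hsq2pos (hssq k) hsq2
  have hb2 : ∀ k, be k * be k * (lam k)⁻¹ = 1 / 2 := fun k =>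
    coef_b2 (lam k) _ _ (hspos k) hsq2pos (hssq k) hsq2
  -- complex versions
  have habC : ∀ k, (al k : ℂ) * (be k : ℂ) = 1 / 2 := by
    intro k
    have := congrArg Complex.ofReal (hab2 k)
    push_cast at this
    exact this
  have haC : ∀ k, (al k : ℂ) * (al k : ℂ) * ((d (σ k) : ℝ) : ℂ) = 1 / 2 := by
    intro k
    have := congrArg Complex.ofReal (ha2 k)
    push_cast at this
    exact this
  have hbC : ∀ k, (be k : ℂ) * (be k : ℂ) * (((d (σ k) : ℝ) : ℂ))⁻¹ = 1 / 2 := by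
    intro k
    have := congrArg Complex.ofReal (hb2 k)
    push_cast at this
    exact this
  -- the matrix M
  set τ : (Fin n ⊕ Fin n) → (Fin n ⊕ Fin n) := Sum.elim σ σ with hτdef
  have hτP : ∀ x, 0 < d (τ x) := by rintro (j | j) <;> exact hσpos _
  set ca : (Fin n ⊕ Fin n) → ℂ := Sum.elim (fun k => (al k : ℂ)) (fun k => Complex.I * (al k : ℂ))
    with hcadef
  set cb : (Fin n ⊕ Fin n) → ℂ := Sum.elim (fun k => (be k : ℂ)) (fun k => -(Complex.I * (be k : ℂ)))
    with hcbdef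
  set M : Matrix (Fin n ⊕ Fin n) (Fin n ⊕ Fin n) ℂ := Matrix.of (fun r c => ca c * U r (τ c) + cb c * Ub r (τ c))
    with hMdef
  have hM : ∀ r c, M r c = ca c * U r (τ c) + cb c * Ub r (τ c) := fun r c => by
    rw [hMdef]; rfl
  have hUbapp : ∀ r j, Ub r j = star (U r j) := fun r j => rfl
  have hUbT : Ubᵀ = Uᴴ := by
    ext i j
    rw [Matrix.transpose_apply, Matrix.conjTranspose_apply, hUbdef, Cj_apply,
      starRingEnd_apply]
  have hA1 : Uᵀ * U = Cj V := by
    rw [hVdef, Cj_mul, Cj_conjTranspose, hUbdef, Cj_Cj]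
  have hA3 : Ubᵀ * U = 1 := by rw [hUbT, hU1]
  have hA4 : Ubᵀ * Ub = V := by rw [hUbT, hVdef]
  have hVττ : ∀ x y, V (τ x) (τ y) = 0 := fun x y => hVP _ _ (hτP x) (hτP y)
  have hCjVττ : ∀ x y, Cj V (τ x) (τ y) = 0 := fun x y => by
    rw [Cj_apply, hVττ]; simp
  have hone : ∀ j k : Fin n, (1 : Matrix (Fin n ⊕ Fin n) (Fin n ⊕ Fin n) ℂ) (σ j) (σ k) = if j = k then 1 else 0 := by
    intro j k
    rw [Matrix.one_apply]
    simp [hσinj.eq_iff]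
  -- reduction helpers (all definitional)
  have hτl : ∀ j : Fin n, τ (Sum.inl j) = σ j := fun _ => rfl
  have hτr : ∀ j : Fin n, τ (Sum.inr j) = σ j := fun _ => rfl
  have hcal : ∀ j : Fin n, ca (Sum.inl j) = (al j : ℂ) := fun _ => rfl
  have hcar : ∀ j : Fin n, ca (Sum.inr j) = Complex.I * (al j : ℂ) := fun _ => rfl
  have hcbl : ∀ j : Fin n, cb (Sum.inl j) = (be j : ℂ) := fun _ => rfl
  have hcbr : ∀ j : Fin n, cb (Sum.inr j) = -(Complex.I * (be j : ℂ)) := fun _ => rfl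
  -- first property : orthogonality
  have hOrtho : Mᵀ * M = 1 := by
    ext x y
    rw [Matrix.mul_apply]
    have hterm : ∀ r, Mᵀ x r * M r y =
        (ca x * U r (τ x) + cb x * Ub r (τ x)) * (ca y * U r (τ y) + cb y * Ub r (τ y)) :=
      fun r => by rw [Matrix.transpose_apply, hM, hM]
    rw [Finset.sum_congr rfl (fun r _ => hterm r),
      sum_expand4 (fun r => U r (τ x)) (fun r => Ub r (τ x))
        (fun r => U r (τ y)) (fun r => Ub r (τ y)) (ca x) (cb x) (ca y) (cb y),
      sumT, sumT, sumT, sumT, hA1, hU3, hA3, hA4, hVττ, hCjVττ]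
    rcases x with j | j <;> rcases y with k | k
    · rw [hτl j, hτl k, hcal j, hcal k, hcbl j, hcbl k, hone]
      by_cases hjk : j = k
      · subst hjk
        rw [if_pos rfl, Matrix.one_apply_eq]
        linear_combination 2 * habC j
      · rw [if_neg hjk, Matrix.one_apply_ne (fun h => hjk (Sum.inl.inj h))]
        ring
    · rw [hτl j, hτr k, hcal j, hcar k, hcbl j, hcbr k, hone]
      by_cases hjk : j = k
      · subst hjk
        rw [if_pos rfl, Matrix.one_apply_ne (by simp)]
        ring
      · rw [if_neg hjk, Matrix.one_apply_ne (by simp)]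
        ring
    · rw [hτr j, hτl k, hcar j, hcal k, hcbr j, hcbl k, hone]
      by_cases hjk : j = k
      · subst hjk
        rw [if_pos rfl, Matrix.one_apply_ne (by simp)]
        ring
      · rw [if_neg hjk, Matrix.one_apply_ne (by simp)]
        ring
    · rw [hτr j, hτr k, hcar j, hcar k, hcbr j, hcbr k, hone]
      by_cases hjk : j = k
      · subst hjk
        rw [if_pos rfl, Matrix.one_apply_eq]
        linear_combination (-2 * Complex.I ^ 2) * habC j - Complex.I_sq
      · rw [if_neg hjk, Matrix.one_apply_ne (fun h => hjk (Sum.inr.inj h))]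
        ring
  -- second property
  have hHM : H * M = Matrix.of (fun r c =>
      (ca c * ((d (τ c) : ℝ) : ℂ)) * U r (τ c)
        + (-(cb c * (((d (τ c) : ℝ) : ℂ))⁻¹)) * Ub r (τ c)) := by
    ext r c
    rw [Matrix.mul_apply]
    have hterm : ∀ s, H r s * M s c =
        ca c * (H r s * U s (τ c)) + cb c * (H r s * Ub s (τ c)) := fun s => by
      rw [hM]; ring
    rw [Finset.sum_congr rfl (fun s _ => hterm s), Finset.sum_add_distrib,
      ← Finset.mul_sum, ← Finset.mul_sum, ← Matrix.mul_apply, ← Matrix.mul_apply,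
      hHU, hHUb]
    rw [hDmdef, hDinvdef, Matrix.mul_diagonal, Matrix.neg_apply, Matrix.mul_diagonal]
    rw [Matrix.of_apply]
    ring
  have hstarUb : ∀ r j, star (Ub r j) = U r j := fun r j => by
    rw [hUbapp, star_star]
  have hMain : Mᴴ * H * M = Complex.I • Jmat n := by
    rw [Matrix.mul_assoc, hHM]
    ext x y
    rw [Matrix.mul_apply]
    have hterm : ∀ r, Mᴴ x r * (Matrix.of (fun r c =>
        (ca c * ((d (τ c) : ℝ) : ℂ)) * U r (τ c)
          + (-(cb c * (((d (τ c) : ℝ) : ℂ))⁻¹)) * Ub r (τ c))) r y =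
        (star (ca x) * Ub r (τ x) + star (cb x) * U r (τ x)) *
          ((ca y * ((d (τ y) : ℝ) : ℂ)) * U r (τ y)
            + (-(cb y * (((d (τ y) : ℝ) : ℂ))⁻¹)) * Ub r (τ y)) := by
      intro r
      rw [Matrix.conjTranspose_apply, hM]
      simp only [Matrix.of_apply, star_add, star_mul']
      rw [← hUbapp, hstarUb]
    rw [Finset.sum_congr rfl (fun r _ => hterm r),
      sum_expand4 (fun r => Ub r (τ x)) (fun r => U r (τ x))
        (fun r => U r (τ y)) (fun r => Ub r (τ y))
        (star (ca x)) (star (cb x))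
        (ca y * ((d (τ y) : ℝ) : ℂ)) (-(cb y * (((d (τ y) : ℝ) : ℂ))⁻¹)),
      sumT, sumT, sumT, sumT, hA3, hA4, hA1, hU3, hVττ, hCjVττ]
    rcases x with j | j <;> rcases y with k | k
    · rw [hτl j, hτl k, hcal j, hcal k, hcbl j, hcbl k, hone]
      simp only [star_mul', star_neg, Complex.star_def, Complex.conj_ofReal, Complex.conj_I,
        Jmat, Matrix.smul_apply, Matrix.fromBlocks_apply₁₁, Matrix.zero_apply, smul_eq_mul,
        mul_zero]
      by_cases hjk : j = k
      · subst hjk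
        rw [if_pos rfl]
        linear_combination haC j - hbC j
      · rw [if_neg hjk]
        ring
    · rw [hτl j, hτr k, hcal j, hcar k, hcbl j, hcbr k, hone]
      simp only [star_mul', star_neg, Complex.star_def, Complex.conj_ofReal, Complex.conj_I,
        Jmat, Matrix.smul_apply, Matrix.fromBlocks_apply₁₂, smul_eq_mul]
      by_cases hjk : j = k
      · subst hjk
        rw [if_pos rfl, Matrix.one_apply_eq]
        linear_combination Complex.I * (haC j + hbC j)
      · rw [if_neg hjk, Matrix.one_apply_ne hjk]
        ring
    · rw [hτr j, hτl k, hcar j, hcal k, hcbr j, hcbl k, hone]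
      simp only [star_mul', star_neg, Complex.star_def, Complex.conj_ofReal, Complex.conj_I,
        Jmat, Matrix.smul_apply, Matrix.fromBlocks_apply₂₁, Matrix.neg_apply, smul_eq_mul]
      by_cases hjk : j = k
      · subst hjk
        rw [if_pos rfl, Matrix.one_apply_eq]
        linear_combination (-Complex.I) * (haC j + hbC j)
      · rw [if_neg hjk, Matrix.one_apply_ne hjk]
        ring
    · rw [hτr j, hτr k, hcar j, hcar k, hcbr j, hcbr k, hone]
      simp only [star_mul', star_neg, Complex.star_def, Complex.conj_ofReal, Complex.conj_I,
        Jmat, Matrix.smul_apply, Matrix.fromBlocks_apply₂₂, Matrix.zero_apply, smul_eq_mul,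
        mul_zero]
      by_cases hjk : j = k
      · subst hjk
        rw [if_pos rfl]
        linear_combination (-(Complex.I ^ 2)) * haC j + (Complex.I ^ 2) * hbC j
      · rw [if_neg hjk]
        ring
  exact ⟨M, hOrtho, hMain⟩

end
end

section
/- Let Γ be a group, n a positive integer, and ρ : Γ → SO(2n,ℂ) an irreducible representation. Suppose there exists P ∈ GL(2n,ℂ) such that P·ρ(γ)·P⁻¹ = conj(ρ(γ)) for all γ ∈ Γ, and let P₀ ∈ O(2n,ℂ) be any matrix with det P₀ = −1. Then there exists Q ∈ SO(2n,ℂ) such that one of the following holds: (i) there exist natural numbers p, q with p + q = 2n such that for all γ ∈ Γ the matrix D_{p,q}⁻¹·Q·ρ(γ)·Q⁻¹·D_{p,q} has real entries; (ii) for all γ ∈ Γ, (Q·ρ(γ)·Q⁻¹)·J_{2n} = J_{2n}·conj(Q·ρ(γ)·Q⁻¹) (values in SO(n,ℍ)); or (iii) for all γ ∈ Γ, (P₀⁻¹·Q·ρ(γ)·Q⁻¹·P₀)·J_{2n} = J_{2n}·conj(P₀⁻¹·Q·ρ(γ)·Q⁻¹·P₀) (values in the twisted copy P₀·SO(n,ℍ)·P₀⁻¹).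 -/
open Matrix

noncomputable section

/-- The position of an index of `Fin n ⊕ Fin n` in `{0, …, 2n−1}`. -/
def sumIdx {n : ℕ} : Fin n ⊕ Fin n → ℕ :=
  Sum.elim (fun i => (i : ℕ)) (fun i => n + (i : ℕ))

/-- The matrix `D_{p,q} = diag(I_p, i·I_q)` of size `2n` (with `p + q = 2n`). -/
def DpqS (n p : ℕ) : Matrix (Fin n ⊕ Fin n) (Fin n ⊕ Fin n) ℂ :=
  Matrix.diagonal (fun i => if sumIdx i < p then 1 else Complex.I)

/-- A representation `ρ : Γ → GL(n,ℂ)` is irreducible if the only invariant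
subspaces of `ℂⁿ` are `{0}` and `ℂⁿ`. -/
def MatIrreducible {Γ : Type*} [Group Γ] {ι : Type*} [Fintype ι] [DecidableEq ι]
    (ρ : Γ →* Matrix.GeneralLinearGroup ι ℂ) : Prop :=
  ∀ W : Submodule ℂ (ι → ℂ),
    (∀ γ : Γ, ∀ x ∈ W, Matrix.mulVec (ρ γ : Matrix ι ι ℂ) x ∈ W) →
      W = ⊥ ∨ W = ⊤

set_option linter.unusedSectionVars false
set_option linter.unusedVariables false
set_option maxHeartbeats 1600000

namespace Stmt12Aux

variable {ι : Type*} [Fintype ι] [DecidableEq ι]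
variable {Γ : Type*} [Group Γ]

local notation "cj" => starRingEnd ℂ

/-- antilinear map `x ↦ conj (P x)` -/
def sig (P : Matrix ι ι ℂ) (x : ι → ℂ) : ι → ℂ := star (P *ᵥ x)

lemma sig_apply (P : Matrix ι ι ℂ) (x : ι → ℂ) (i : ι) :
    sig P x i = cj ((P *ᵥ x) i) := rfl

lemma sig_add (P : Matrix ι ι ℂ) (x y : ι → ℂ) :
    sig P (x + y) = sig P x + sig P y := by
  funext i
  simp [sig_apply, Matrix.mulVec_add, map_add]

lemma sig_sub (P : Matrix ι ι ℂ) (x y : ι → ℂ) :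
    sig P (x - y) = sig P x - sig P y := by
  funext i
  simp [sig_apply, Matrix.mulVec_sub, map_sub]

lemma sig_smul (P : Matrix ι ι ℂ) (a : ℂ) (x : ι → ℂ) :
    sig P (a • x) = (cj a) • sig P x := by
  funext i
  simp [sig_apply, Matrix.mulVec_smul, _root_.map_mul]

lemma star_dot (x y : ι → ℂ) : (star x) ⬝ᵥ (star y) = cj (x ⬝ᵥ y) := by
  simp only [dotProduct, map_sum, Pi.star_apply]
  congr 1; funext i
  simp [_root_.map_mul]

lemma dot_comm (x y : ι → ℂ) : x ⬝ᵥ y = y ⬝ᵥ x := dotProduct_comm x y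

lemma mulVec_dot (A : Matrix ι ι ℂ) (x y : ι → ℂ) :
    (A *ᵥ x) ⬝ᵥ y = x ⬝ᵥ (Aᵀ *ᵥ y) := by
  rw [← Matrix.vecMul_transpose, dotProduct_mulVec]

lemma sig_dot_sig {P : Matrix ι ι ℂ} (h1 : Pᵀ * P = 1) (x y : ι → ℂ) :
    (sig P x) ⬝ᵥ (sig P y) = cj (x ⬝ᵥ y) := by
  unfold sig
  rw [star_dot]
  congr 1
  rw [mulVec_dot, Matrix.mulVec_mulVec, h1, Matrix.one_mulVec]

lemma mulVec_star (P : Matrix ι ι ℂ) (y : ι → ℂ) :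
    P *ᵥ (star y) = star ((P.map cj) *ᵥ y) := by
  funext i
  simp only [Matrix.mulVec, dotProduct, Pi.star_apply, Matrix.map_apply]
  rw [star_sum]
  congr 1; funext j; simp

lemma sig_sig {P : Matrix ι ι ℂ} {ε : ℂ} (h2 : (P.map cj) * P = ε • 1) (x : ι → ℂ) :
    sig P (sig P x) = ε • x := by
  unfold sig
  rw [mulVec_star, star_star, Matrix.mulVec_mulVec, h2]
  funext i
  simp [Matrix.smul_mulVec, Matrix.one_mulVec]


section NE
variable [Nonempty ι]

lemma schur (ρ : Γ →* Matrix.GeneralLinearGroup ι ℂ) (hirr : MatIrreducible ρ)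
    (A : Matrix ι ι ℂ) (hA : ∀ γ : Γ, A * (ρ γ : Matrix ι ι ℂ) = (ρ γ : Matrix ι ι ℂ) * A) :
    ∃ c : ℂ, A = c • (1 : Matrix ι ι ℂ) := by
  set f : Module.End ℂ (ι → ℂ) := Matrix.toLin' A with hf
  obtain ⟨μ, hμ⟩ := Module.End.exists_eigenvalue f
  refine ⟨μ, ?_⟩
  have hne : f.eigenspace μ ≠ ⊥ := Module.End.hasEigenvalue_iff.mp hμ
  have hinv : ∀ γ : Γ, ∀ x ∈ f.eigenspace μ, (ρ γ : Matrix ι ι ℂ) *ᵥ x ∈ f.eigenspace μ := by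
    intro γ x hx
    rw [Module.End.mem_eigenspace_iff] at hx ⊢
    rw [hf, Matrix.toLin'_apply] at hx ⊢
    rw [Matrix.mulVec_mulVec, hA γ, ← Matrix.mulVec_mulVec, hx, Matrix.mulVec_smul]
  have hW : f.eigenspace μ = ⊤ := by
    rcases hirr (f.eigenspace μ) hinv with h | h
    · exact absurd h hne
    · exact h
  have hall : ∀ x : ι → ℂ, A *ᵥ x = μ • x := by
    intro x
    have : x ∈ f.eigenspace μ := hW ▸ Submodule.mem_top
    rw [Module.End.mem_eigenspace_iff, hf, Matrix.toLin'_apply] at this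
    exact this
  apply Matrix.toLin'.injective
  apply LinearMap.ext
  intro x
  rw [Matrix.toLin'_apply, hall x]
  simp [Matrix.toLin'_apply, Matrix.smul_mulVec, Matrix.one_mulVec]

/-- Normalization: replace the intertwiner `P` by `P₁` orthogonal with
`conj(P₁) * P₁ = ε • 1`, `ε = ±1`. -/
lemma normalizeP (ρ : Γ →* Matrix.GeneralLinearGroup ι ℂ)
    (ho : ∀ γ : Γ, (ρ γ : Matrix ι ι ℂ)ᵀ * (ρ γ : Matrix ι ι ℂ) = 1)
    (hirr : MatIrreducible ρ)
    (P : Matrix ι ι ℂ) (hP : IsUnit P)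
    (hconj' : ∀ γ : Γ, P * (ρ γ : Matrix ι ι ℂ) = (ρ γ : Matrix ι ι ℂ).map cj * P) :
    ∃ (P₁ : Matrix ι ι ℂ) (ε : ℂ), (ε = 1 ∨ ε = -1) ∧
      P₁ᵀ * P₁ = 1 ∧ P₁ * P₁ᵀ = 1 ∧ (P₁.map cj) * P₁ = ε • 1 ∧ P₁ * (P₁.map cj) = ε • 1 ∧
      (∀ γ : Γ, P₁ * (ρ γ : Matrix ι ι ℂ) = (ρ γ : Matrix ι ι ℂ).map cj * P₁) := by
  have hPdet : IsUnit P.det := (Matrix.isUnit_iff_isUnit_det P).mp hP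
  -- conj of hconj'
  have hmapconjconj : ∀ M : Matrix ι ι ℂ, (M.map cj).map cj = M := by
    intro M; ext i j; simp
  have hconjc : ∀ γ : Γ, (P.map cj) * (ρ γ : Matrix ι ι ℂ).map cj
      = (ρ γ : Matrix ι ι ℂ) * (P.map cj) := by
    intro γ
    have := congrArg (fun M : Matrix ι ι ℂ => M.map cj) (hconj' γ)
    simpa [Matrix.map_mul, hmapconjconj] using this
  -- transpose of ρ is ρ of inverse
  have hotr : ∀ γ : Γ, (ρ γ : Matrix ι ι ℂ)ᵀ = (ρ γ⁻¹ : Matrix ι ι ℂ) := by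
    intro γ
    have h1 : (ρ γ⁻¹ : Matrix ι ι ℂ) * (ρ γ : Matrix ι ι ℂ) = 1 := by
      have : (ρ γ⁻¹ * ρ γ : Matrix.GeneralLinearGroup ι ℂ) = 1 := by
        rw [← _root_.map_mul, inv_mul_cancel, _root_.map_one]
      calc (ρ γ⁻¹ : Matrix ι ι ℂ) * (ρ γ : Matrix ι ι ℂ)
          = ((ρ γ⁻¹ * ρ γ : Matrix.GeneralLinearGroup ι ℂ) : Matrix ι ι ℂ) := rfl
        _ = 1 := by rw [this]; rfl
    have h2 := ho γ
    have h3 : (ρ γ : Matrix ι ι ℂ) * (ρ γ⁻¹ : Matrix ι ι ℂ) = 1 :=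
      mul_eq_one_comm.mp h1
    calc (ρ γ : Matrix ι ι ℂ)ᵀ = (ρ γ : Matrix ι ι ℂ)ᵀ * ((ρ γ : Matrix ι ι ℂ) * (ρ γ⁻¹ : Matrix ι ι ℂ)) := by
          rw [h3, mul_one]
      _ = ((ρ γ : Matrix ι ι ℂ)ᵀ * (ρ γ : Matrix ι ι ℂ)) * (ρ γ⁻¹ : Matrix ι ι ℂ) := by rw [mul_assoc]
      _ = (ρ γ⁻¹ : Matrix ι ι ℂ) := by rw [h2, one_mul]
  -- Pᵀ * P commutes with ρ
  have hconjT : ∀ γ : Γ, (ρ γ : Matrix ι ι ℂ) * Pᵀ = Pᵀ * (ρ γ : Matrix ι ι ℂ).map cj := by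
    intro γ
    have := congrArg Matrix.transpose (hconj' γ⁻¹)
    rw [Matrix.transpose_mul, Matrix.transpose_mul] at this
    rw [← Matrix.transpose_map] at this
    rw [hotr γ⁻¹, inv_inv] at this
    simpa using this
  have hA2 : ∀ γ : Γ, (Pᵀ * P) * (ρ γ : Matrix ι ι ℂ) = (ρ γ : Matrix ι ι ℂ) * (Pᵀ * P) := by
    intro γ
    calc (Pᵀ * P) * (ρ γ : Matrix ι ι ℂ) = Pᵀ * (P * (ρ γ : Matrix ι ι ℂ)) := by rw [mul_assoc]
      _ = Pᵀ * ((ρ γ : Matrix ι ι ℂ).map cj * P) := by rw [hconj' γ]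
      _ = (Pᵀ * (ρ γ : Matrix ι ι ℂ).map cj) * P := by rw [mul_assoc]
      _ = ((ρ γ : Matrix ι ι ℂ) * Pᵀ) * P := by rw [hconjT γ]
      _ = (ρ γ : Matrix ι ι ℂ) * (Pᵀ * P) := by rw [mul_assoc]
  obtain ⟨μ, hμ⟩ := schur ρ hirr (Pᵀ * P) hA2
  -- μ ≠ 0
  have hμne : μ ≠ 0 := by
    intro h
    rw [h, zero_smul] at hμ
    have : (Pᵀ * P).det = 0 := by rw [hμ]; simp [Matrix.det_zero]
    rw [Matrix.det_mul, Matrix.det_transpose] at this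
    rcases mul_eq_zero.mp this with h' | h' <;>
      exact hPdet.ne_zero h'
  obtain ⟨c, hc⟩ := IsAlgClosed.exists_pow_nat_eq (k := ℂ) μ⁻¹ (n := 2) (by norm_num)
  have hcne : c ≠ 0 := by
    intro h
    have h2 : μ⁻¹ = 0 := by rw [← hc, h]; ring
    exact hμne (inv_eq_zero.mp h2)
  set P₁ : Matrix ι ι ℂ := c • P with hP₁
  have h1 : P₁ᵀ * P₁ = 1 := by
    rw [hP₁, Matrix.transpose_smul, Matrix.smul_mul, Matrix.mul_smul, hμ, smul_smul, smul_smul]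
    rw [show c * c * μ = c ^ 2 * μ by ring, hc, inv_mul_cancel₀ hμne, one_smul]

  have h1' : P₁ * P₁ᵀ = 1 := mul_eq_one_comm.mp h1
  have hP₁unit : IsUnit P₁.det := by
    have : P₁.det * P₁ᵀ.det = 1 := by rw [← Matrix.det_mul, h1']; simp
    exact IsUnit.of_mul_eq_one _ this
  have hconj₁ : ∀ γ : Γ, P₁ * (ρ γ : Matrix ι ι ℂ) = (ρ γ : Matrix ι ι ℂ).map cj * P₁ := by
    intro γ
    rw [hP₁, Matrix.smul_mul, Matrix.mul_smul, hconj' γ]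
  -- conj(P₁) * P₁ commutes with ρ
  have hconjc₁ : ∀ γ : Γ, (P₁.map cj) * (ρ γ : Matrix ι ι ℂ).map cj
      = (ρ γ : Matrix ι ι ℂ) * (P₁.map cj) := by
    intro γ
    have := congrArg (fun M : Matrix ι ι ℂ => M.map cj) (hconj₁ γ)
    simpa [Matrix.map_mul, hmapconjconj] using this
  have hA1 : ∀ γ : Γ, ((P₁.map cj) * P₁) * (ρ γ : Matrix ι ι ℂ)
      = (ρ γ : Matrix ι ι ℂ) * ((P₁.map cj) * P₁) := by
    intro γ
    calc ((P₁.map cj) * P₁) * (ρ γ : Matrix ι ι ℂ) = (P₁.map cj) * (P₁ * (ρ γ : Matrix ι ι ℂ)) := by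
          rw [mul_assoc]
      _ = (P₁.map cj) * ((ρ γ : Matrix ι ι ℂ).map cj * P₁) := by rw [hconj₁ γ]
      _ = ((P₁.map cj) * (ρ γ : Matrix ι ι ℂ).map cj) * P₁ := by rw [mul_assoc]
      _ = ((ρ γ : Matrix ι ι ℂ) * (P₁.map cj)) * P₁ := by rw [hconjc₁ γ]
      _ = (ρ γ : Matrix ι ι ℂ) * ((P₁.map cj) * P₁) := by rw [mul_assoc]
  obtain ⟨ε, hε⟩ := schur ρ hirr ((P₁.map cj) * P₁) hA1
  -- conj(P₁) = ε • P₁ᵀ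
  have hP₁inv : P₁⁻¹ = P₁ᵀ := Matrix.inv_eq_right_inv h1'
  have hcancel : ∀ X Y : Matrix ι ι ℂ, X * P₁ = Y * P₁ → X = Y := by
    intro X Y h
    have := congrArg (fun M => M * P₁ᵀ) h
    simpa [mul_assoc, h1'] using this
  have hPc : P₁.map cj = ε • P₁ᵀ := by
    apply hcancel
    rw [hε, Matrix.smul_mul, h1]
  have hε2 : P₁ * (P₁.map cj) = ε • 1 := by
    rw [hPc, Matrix.mul_smul, h1']
  -- ε real
  have hεreal : cj ε = ε := by
    have := congrArg (fun M : Matrix ι ι ℂ => M.map cj) hε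
    simp only [Matrix.map_mul, hmapconjconj] at this
    -- (P₁ * P₁.map cj) = (ε•1).map cj = cj ε • 1
    have h2 : P₁ * (P₁.map cj) = (ε • (1:Matrix ι ι ℂ)).map cj := this
    rw [hε2] at h2
    have h3 : (ε • (1:Matrix ι ι ℂ)).map cj = cj ε • 1 := by
      ext i j; by_cases h : i = j <;> simp [Matrix.map_apply, Matrix.smul_apply, Matrix.one_apply, h]
    rw [h3] at h2
    have : ∃ i : ι, True := ⟨Classical.arbitrary ι, trivial⟩
    obtain ⟨i, -⟩ := this
    have := congrFun (congrFun h2 i) i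
    simpa [Matrix.smul_apply, Matrix.one_apply] using this.symm
  -- ε² = 1
  have hεsq : ε * ε = 1 := by
    have key : P₁ = (ε * ε) • P₁ := by
      conv_lhs => rw [← hmapconjconj P₁, hPc]
      ext i j
      simp only [Matrix.map_apply, Matrix.smul_apply, Matrix.transpose_apply,
        _root_.map_mul, hεreal, smul_eq_mul]
      have h7 := congrFun (congrFun hPc j) i
      simp only [Matrix.map_apply, Matrix.smul_apply, Matrix.transpose_apply,
        smul_eq_mul] at h7
      rw [h7]; ring
    by_contra hne
    have hzero : P₁ = 0 := by
      have h5 : (1 - ε * ε) • P₁ = 0 := by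
        rw [sub_smul, one_smul, ← key]; simp
      have h6 : (1 - ε * ε) ≠ 0 := fun h => hne (by linear_combination -h)
      have h8 := congrArg (fun M => (1 - ε*ε)⁻¹ • M) h5
      simpa [smul_smul, inv_mul_cancel₀ h6] using h8
    rw [hzero] at h1'
    have hne01 : (0 : Matrix ι ι ℂ) ≠ 1 := by
      intro h
      have := congrFun (congrFun h (Classical.arbitrary ι)) (Classical.arbitrary ι)
      simp [Matrix.one_apply] at this
    exact hne01 (by simpa using h1')
  exact ⟨P₁, ε, mul_self_eq_one_iff.mp hεsq, h1, h1', hε, hε2, hconj₁⟩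


end NE

lemma dot_sum_right {κ : Type*} [Fintype κ] (x : ι → ℂ) (w : κ → ι → ℂ) :
    x ⬝ᵥ (∑ j, w j) = ∑ j, x ⬝ᵥ w j := by
  simp [dotProduct, Finset.mul_sum]
  rw [Finset.sum_comm]

lemma span_perp {κ : Type*} (u : κ → ι → ℂ) (x : ι → ℂ) (hx : ∀ i, u i ⬝ᵥ x = 0)
    (w : ι → ℂ) (hw : w ∈ Submodule.span ℂ (Set.range u)) : w ⬝ᵥ x = 0 := by
  induction hw using Submodule.span_induction with
  | mem w hwmem => obtain ⟨i, rfl⟩ := hwmem; exact hx i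
  | zero => simp
  | add a b _ _ ha hb => rw [add_dotProduct, ha, hb, add_zero]
  | smul c a _ ha => rw [smul_dotProduct, ha, smul_zero]

lemma perp_sig {κ : Type*} {P : Matrix ι ι ℂ} {ε : ℂ}
    (h1 : Pᵀ * P = 1) (h2 : (P.map cj) * P = ε • 1) (hε : ε = 1 ∨ ε = -1)
    (u : κ → ι → ℂ)
    (hstab : ∀ i, sig P (u i) ∈ Submodule.span ℂ (Set.range u))
    (x : ι → ℂ) (hx : ∀ i, u i ⬝ᵥ x = 0) :
    ∀ i, u i ⬝ᵥ sig P x = 0 := by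
  intro i
  have hεsq : ε * ε = 1 := by rcases hε with h | h <;> rw [h] <;> ring
  have hself : u i = ε • sig P (sig P (u i)) := by
    rw [sig_sig h2, smul_smul, hεsq, one_smul]
  rw [hself, smul_dotProduct, sig_dot_sig h1]
  rw [span_perp u x hx _ (hstab i)]
  simp

lemma ext_lemma {κ : Type*} [Fintype κ] [DecidableEq κ] {P : Matrix ι ι ℂ} {ε : ℂ}
    (h1 : Pᵀ * P = 1) (h2 : (P.map cj) * P = ε • 1) (hε : ε = 1 ∨ ε = -1)
    (u : κ → ι → ℂ)
    (hu : ∀ i j, u i ⬝ᵥ u j = if i = j then 1 else 0)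
    (hstab : ∀ i, sig P (u i) ∈ Submodule.span ℂ (Set.range u))
    (hk : Fintype.card κ < Fintype.card ι) :
    ∃ v : ι → ℂ, v ⬝ᵥ v = 1 ∧ (∀ i, u i ⬝ᵥ v = 0) ∧ (∀ i, u i ⬝ᵥ sig P v = 0) := by
  -- a nonzero vector orthogonal to all `u i`
  have hker : ∃ x : ι → ℂ, x ≠ 0 ∧ ∀ i, u i ⬝ᵥ x = 0 := by
    let f : (ι → ℂ) →ₗ[ℂ] (κ → ℂ) :=
      { toFun := fun x => fun i => u i ⬝ᵥ x
        map_add' := by intro a b; funext i; simp [dotProduct_add]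
        map_smul' := by intro c a; funext i; simp [dotProduct_smul] }
    have hlt : Module.finrank ℂ (κ → ℂ) < Module.finrank ℂ (ι → ℂ) := by
      rw [Module.finrank_pi, Module.finrank_pi]; exact hk
    have := LinearMap.ker_ne_bot_of_finrank_lt (f := f) hlt
    rw [Submodule.ne_bot_iff] at this
    obtain ⟨x, hx, hxne⟩ := this
    refine ⟨x, hxne, fun i => ?_⟩
    rw [LinearMap.mem_ker] at hx
    exact congrFun hx i
  obtain ⟨x, hxne, hxperp⟩ := hker
  -- project star x onto the complement
  set z : ι → ℂ := star x - ∑ j, (u j ⬝ᵥ star x) • u j with hz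
  have hzperp : ∀ i, u i ⬝ᵥ z = 0 := by
    intro i
    rw [hz, dotProduct_sub, dot_sum_right]
    have : ∀ j, u i ⬝ᵥ ((u j ⬝ᵥ star x) • u j) = if j = i then u i ⬝ᵥ star x else 0 := by
      intro j
      rw [dotProduct_smul, hu i j]
      by_cases h : j = i <;> simp [h]
      intro h'; exact absurd h'.symm h
    rw [Finset.sum_congr rfl (fun j _ => this j), Finset.sum_ite_eq']
    simp
  have hxz : x ⬝ᵥ z ≠ 0 := by
    rw [hz, dotProduct_sub, dot_sum_right]
    have : ∀ j, x ⬝ᵥ ((u j ⬝ᵥ star x) • u j) = 0 := by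
      intro j
      rw [dotProduct_smul,
        show x ⬝ᵥ u j = 0 from (dotProduct_comm x (u j)).trans (hxperp j), smul_zero]
    rw [Finset.sum_congr rfl (fun j _ => this j), Finset.sum_const_zero, sub_zero]
    rw [dotProduct_comm]
    intro hcon
    apply hxne
    ext i
    have h0 : ∑ i, Complex.normSq (x i) = 0 := by
      have := congrArg Complex.re hcon
      rw [show (0:ℂ).re = 0 from rfl] at this
      rw [← this]
      simp [dotProduct, Complex.re_sum, Complex.normSq, Complex.mul_re]
    have h1 : Complex.normSq (x i) = 0 := by
      have hnonneg : ∀ j ∈ Finset.univ, (0:ℝ) ≤ Complex.normSq (x j) := fun j _ => Complex.normSq_nonneg _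
      exact (Finset.sum_eq_zero_iff_of_nonneg hnonneg).mp h0 i (Finset.mem_univ i)
    simpa using Complex.normSq_eq_zero.mp h1
  -- find y orthogonal to all u i with y ⬝ᵥ y ≠ 0
  have hy : ∃ y : ι → ℂ, y ⬝ᵥ y ≠ 0 ∧ ∀ i, u i ⬝ᵥ y = 0 := by
    by_cases hxx : x ⬝ᵥ x ≠ 0
    · exact ⟨x, hxx, hxperp⟩
    by_cases hzz : z ⬝ᵥ z ≠ 0
    · exact ⟨z, hzz, hzperp⟩
    push_neg at hxx hzz
    refine ⟨x + z, ?_, fun i => by rw [dotProduct_add, hxperp i, hzperp i, add_zero]⟩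
    rw [add_dotProduct, dotProduct_add, dotProduct_add]
    rw [hxx, hzz, dotProduct_comm z x]
    intro h
    apply hxz
    have : (2 : ℂ) * (x ⬝ᵥ z) = 0 := by linear_combination h
    rcases mul_eq_zero.mp this with h' | h'
    · norm_num at h'
    · exact h'
  obtain ⟨y, hyy, hyperp⟩ := hy
  obtain ⟨c, hc⟩ := IsAlgClosed.exists_pow_nat_eq (k := ℂ) (y ⬝ᵥ y)⁻¹ (n := 2) (by norm_num)
  refine ⟨c • y, ?_, fun i => ?_, ?_⟩
  · rw [smul_dotProduct, dotProduct_smul, smul_smul, smul_eq_mul]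
    rw [show c * c = c ^ 2 by ring, hc, inv_mul_cancel₀ hyy]
  · rw [dotProduct_smul, hyperp i, smul_zero]
  · exact perp_sig h1 h2 hε u hstab (c • y)
      (fun i => by rw [dotProduct_smul, hyperp i, smul_zero])


lemma dot_expand (a b c d : ℂ) (x y z w : ι → ℂ) :
    (a • x + b • y) ⬝ᵥ (c • z + d • w)
      = a*c*(x ⬝ᵥ z) + a*d*(x ⬝ᵥ w) + b*c*(y ⬝ᵥ z) + b*d*(y ⬝ᵥ w) := by
  simp only [add_dotProduct, dotProduct_add, smul_dotProduct,
    dotProduct_smul, smul_eq_mul]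
  ring

/-- real-type step: from `v` in the orthogonal complement get a `sig`-eigenvector. -/
lemma real_step {P : Matrix ι ι ℂ} (h1 : Pᵀ * P = 1)
    (h2 : (P.map cj) * P = (1 : ℂ) • 1) (v : ι → ℂ) (hv1 : v ⬝ᵥ v = 1) :
    ∃ (w : ι → ℂ) (snew : ℂ) (c₁ c₂ : ℂ), w = c₁ • v + c₂ • sig P v ∧
      (snew = 1 ∨ snew = -1) ∧ sig P w = snew • w ∧ w ⬝ᵥ w = 1 := by
  set γ : ℂ := v ⬝ᵥ sig P v with hγ
  have hγreal : cj γ = γ := by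
    rw [hγ, ← sig_dot_sig h1 v (sig P v), sig_sig h2, one_smul, dotProduct_comm]
  have hγre : γ = ((γ.re : ℝ) : ℂ) := (Complex.conj_eq_iff_re.mp hγreal).symm
  set a : ℝ := γ.re with ha
  have d11 : v ⬝ᵥ v = 1 := hv1
  have d12 : v ⬝ᵥ sig P v = γ := rfl
  have d21 : sig P v ⬝ᵥ v = γ := by rw [dotProduct_comm]
  have d22 : sig P v ⬝ᵥ sig P v = 1 := by rw [sig_dot_sig h1, d11]; simp
  by_cases hγ1 : γ = -1
  · refine ⟨(-1/2 : ℂ) • v + (1/2 : ℂ) • sig P v, -1, -1/2, 1/2, rfl, Or.inr rfl, ?_, ?_⟩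
    · rw [sig_add, sig_smul, sig_smul, sig_sig h2]
      have e1 : cj (-1/2 : ℂ) = -1/2 := Complex.conj_eq_iff_im.mpr (by norm_num)
      have e2 : cj (1/2 : ℂ) = 1/2 := Complex.conj_eq_iff_im.mpr (by norm_num)
      rw [e1, e2]
      funext i
      simp only [Pi.add_apply, Pi.smul_apply, neg_smul, Pi.neg_apply, smul_eq_mul,
        one_smul]
      ring
    · rw [dot_expand, d11, d12, d21, d22, hγ1]; norm_num
  · have hαne : (2 + 2*a : ℝ) ≠ 0 := by
      intro h
      apply hγ1
      rw [hγre, show a = -1 by linarith]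
      norm_num
    have hαC : (2 + 2*γ : ℂ) ≠ 0 := by
      rw [hγre]
      intro h
      apply hαne
      have : ((2 + 2*a : ℝ) : ℂ) = 0 := by push_cast; push_cast at h; linear_combination h
      exact_mod_cast this
    rcases lt_or_gt_of_ne hαne with hneg | hpos
    · -- negative case
      set r : ℝ := Real.sqrt (-(2+2*a)) with hr
      have hrpos : 0 < r := Real.sqrt_pos.mpr (by linarith)
      have hrsq : (r:ℝ)^2 = -(2+2*a) := Real.sq_sqrt (by linarith)
      have h5 : ((r:ℂ))^2 = -(2+2*γ) := by
        calc ((r:ℂ))^2 = ((r^2 : ℝ) : ℂ) := by push_cast; ring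
          _ = ((-(2+2*a) : ℝ) : ℂ) := by rw [hrsq]
          _ = -(2+2*γ) := by rw [hγre]; push_cast; ring
      set c : ℂ := Complex.I * (r : ℂ)⁻¹ with hc
      have e : c * c = (2+2*γ)⁻¹ := by
        rw [hc, mul_mul_mul_comm, Complex.I_mul_I, ← mul_inv, ← sq, h5, inv_neg]
        ring
      have ecj : cj c = -c := by
        rw [hc, _root_.map_mul, Complex.conj_I, map_inv₀, Complex.conj_ofReal]
        ring
      refine ⟨c • v + c • sig P v, -1, c, c, rfl, Or.inr rfl, ?_, ?_⟩
      · rw [sig_add, sig_smul, sig_smul, sig_sig h2, ecj]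
        funext i
        simp only [Pi.add_apply, Pi.smul_apply, neg_smul, Pi.neg_apply, smul_eq_mul,
          one_smul]
        ring
      · rw [dot_expand, d11, d12, d21, d22, e]
        have hfin : (2+2*γ)⁻¹ * (2+2*γ) = 1 := inv_mul_cancel₀ hαC
        linear_combination hfin
    · -- positive case
      set r : ℝ := Real.sqrt (2+2*a) with hr
      have hrpos : 0 < r := Real.sqrt_pos.mpr (by linarith)
      have hrsq : (r:ℝ)^2 = 2+2*a := Real.sq_sqrt (by linarith)
      have h5 : ((r:ℂ))^2 = 2+2*γ := by
        calc ((r:ℂ))^2 = ((r^2 : ℝ) : ℂ) := by push_cast; ring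
          _ = ((2+2*a : ℝ) : ℂ) := by rw [hrsq]
          _ = 2+2*γ := by rw [hγre]; push_cast; ring
      set c : ℂ := (r : ℂ)⁻¹ with hc
      have e : c * c = (2+2*γ)⁻¹ := by
        rw [hc, ← mul_inv, ← sq, h5]
      have ecj : cj c = c := by
        rw [hc, map_inv₀, Complex.conj_ofReal]
      refine ⟨c • v + c • sig P v, 1, c, c, rfl, Or.inl rfl, ?_, ?_⟩
      · rw [sig_add, sig_smul, sig_smul, sig_sig h2, ecj]
        funext i
        simp only [Pi.add_apply, Pi.smul_apply, smul_eq_mul, one_smul]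
        ring
      · rw [dot_expand, d11, d12, d21, d22, e]
        have hfin : (2+2*γ)⁻¹ * (2+2*γ) = 1 := inv_mul_cancel₀ hαC
        linear_combination hfin

/-- Build a full real-type family. -/
lemma build_real {P : Matrix ι ι ℂ} (h1 : Pᵀ * P = 1)
    (h2 : (P.map cj) * P = (1 : ℂ) • 1) :
    ∀ k : ℕ, k ≤ Fintype.card ι → ∃ (u : Fin k → ι → ℂ) (s : Fin k → ℂ),
      (∀ i j, u i ⬝ᵥ u j = if i = j then 1 else 0) ∧
      (∀ i, s i = 1 ∨ s i = -1) ∧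
      (∀ i, sig P (u i) = s i • u i) := by
  intro k
  induction k with
  | zero =>
    intro _
    exact ⟨Fin.elim0, Fin.elim0, fun i => i.elim0, fun i => i.elim0, fun i => i.elim0⟩
  | succ k ih =>
    intro hk1
    obtain ⟨u, s, hu, hs, hsig⟩ := ih (Nat.le_of_succ_le hk1)
    have hstab : ∀ i, sig P (u i) ∈ Submodule.span ℂ (Set.range u) := by
      intro i
      rw [hsig i]
      exact Submodule.smul_mem _ _ (Submodule.subset_span (Set.mem_range_self i))
    have hklt : Fintype.card (Fin k) < Fintype.card ι := by
      rw [Fintype.card_fin]; omega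
    obtain ⟨v, hv1, hv2, hv3⟩ := ext_lemma h1 h2 (Or.inl rfl) u hu hstab hklt
    obtain ⟨w, snew, c₁, c₂, hwc, hsnew, hsigw, hww⟩ := real_step h1 h2 v hv1
    have hperpw : ∀ i, u i ⬝ᵥ w = 0 := by
      intro i
      rw [hwc, dotProduct_add, dotProduct_smul, dotProduct_smul,
        hv2 i, hv3 i]
      simp
    refine ⟨Fin.snoc u w, Fin.snoc s snew, ?_, ?_, ?_⟩
    · intro i j
      refine Fin.lastCases ?_ (fun i' => ?_) i
      · refine Fin.lastCases ?_ (fun j' => ?_) j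
        · simp [Fin.snoc_last, hww]
        · have hne : Fin.last k ≠ j'.castSucc := (Fin.castSucc_lt_last j').ne'
          rw [Fin.snoc_last, Fin.snoc_castSucc, dotProduct_comm, hperpw j']
          simp [hne]
      · refine Fin.lastCases ?_ (fun j' => ?_) j
        · have hne : i'.castSucc ≠ Fin.last k := (Fin.castSucc_lt_last i').ne
          rw [Fin.snoc_last, Fin.snoc_castSucc, hperpw i']
          simp [hne]
        · rw [Fin.snoc_castSucc, Fin.snoc_castSucc, hu i' j']
          simp [Fin.castSucc_inj]
    · intro i
      refine Fin.lastCases ?_ (fun i' => ?_) i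
      · rw [Fin.snoc_last]; exact hsnew
      · rw [Fin.snoc_castSucc]; exact hs i'
    · intro i
      refine Fin.lastCases ?_ (fun i' => ?_) i
      · rw [Fin.snoc_last, Fin.snoc_last, hsigw]
      · rw [Fin.snoc_castSucc, Fin.snoc_castSucc, hsig i']

/-- Build a full quaternionic-type family, `ε = -1`. -/
lemma build_quat {P : Matrix ι ι ℂ} (h1 : Pᵀ * P = 1)
    (h2 : (P.map cj) * P = (-1 : ℂ) • 1) :
    ∀ k : ℕ, 2 * k ≤ Fintype.card ι → ∃ v : Fin k → ι → ℂ,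
      (∀ i j, v i ⬝ᵥ v j = if i = j then 1 else 0) ∧
      (∀ i j, v i ⬝ᵥ sig P (v j) = 0) := by
  intro k
  induction k with
  | zero =>
    intro _
    exact ⟨Fin.elim0, fun i => i.elim0, fun i => i.elim0⟩
  | succ k ih =>
    intro hk1
    obtain ⟨v, hvv, hvs⟩ := ih (by omega)
    -- combined family
    set u : (Fin k ⊕ Fin k) → ι → ℂ := Sum.elim v (fun i => sig P (v i)) with hudef
    have hsvv : ∀ i j, sig P (v i) ⬝ᵥ sig P (v j) = if i = j then 1 else 0 := by
      intro i j
      rw [sig_dot_sig h1, hvv]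
      by_cases h : i = j <;> simp [h]
    have hsvv2 : ∀ i j, sig P (v i) ⬝ᵥ v j = 0 := by
      intro i j
      rw [dotProduct_comm]; exact hvs j i
    have hu : ∀ i j, u i ⬝ᵥ u j = if i = j then 1 else 0 := by
      intro i j
      cases i with
      | inl i' => cases j with
        | inl j' => rw [hudef]; simp only [Sum.elim_inl]; rw [hvv]
                    by_cases h : i' = j' <;> simp [h]
        | inr j' => rw [hudef]; simp only [Sum.elim_inl, Sum.elim_inr]; rw [hvs]; simp
      | inr i' => cases j with
        | inl j' => rw [hudef]; simp only [Sum.elim_inl, Sum.elim_inr]; rw [hsvv2]; simp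
        | inr j' => rw [hudef]; simp only [Sum.elim_inr]; rw [hsvv]
                    by_cases h : i' = j' <;> simp [h]
    have hstab : ∀ i, sig P (u i) ∈ Submodule.span ℂ (Set.range u) := by
      intro i
      cases i with
      | inl i' =>
        have : sig P (u (Sum.inl i')) = u (Sum.inr i') := by rw [hudef]; simp
        rw [this]
        exact Submodule.subset_span (Set.mem_range_self _)
      | inr i' =>
        have : sig P (u (Sum.inr i')) = (-1 : ℂ) • u (Sum.inl i') := by
          rw [hudef]; simp only [Sum.elim_inl, Sum.elim_inr]
          rw [sig_sig h2]
        rw [this]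
        exact Submodule.smul_mem _ _ (Submodule.subset_span (Set.mem_range_self _))
    have hklt : Fintype.card (Fin k ⊕ Fin k) < Fintype.card ι := by
      simp only [Fintype.card_sum, Fintype.card_fin]
      omega
    obtain ⟨v₁, hv1, hv2, hv3⟩ := ext_lemma h1 h2 (Or.inr rfl) u hu hstab hklt
    -- γ is purely imaginary
    set γ : ℂ := v₁ ⬝ᵥ sig P v₁ with hγ
    have hγim : cj γ = -γ := by
      rw [hγ, ← sig_dot_sig h1 v₁ (sig P v₁), sig_sig h2]
      rw [dotProduct_smul, dotProduct_comm]
      simp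
    have d11 : v₁ ⬝ᵥ v₁ = 1 := hv1
    have d12 : v₁ ⬝ᵥ sig P v₁ = γ := rfl
    have d21 : sig P v₁ ⬝ᵥ v₁ = γ := by rw [dotProduct_comm]
    have d22 : sig P v₁ ⬝ᵥ sig P v₁ = 1 := by rw [sig_dot_sig h1, d11]; simp
    have hβ : (2 + 2*γ : ℂ) ≠ 0 := by
      intro h
      have hγval : γ = -1 := by linear_combination h/2
      rw [hγval] at hγim
      simp at hγim
      norm_num at hγim
    obtain ⟨c, hc⟩ := IsAlgClosed.exists_pow_nat_eq (k := ℂ) (2+2*γ)⁻¹ (n := 2) (by norm_num)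
    set w : ι → ℂ := c • (v₁ + sig P v₁) with hw
    have hsw : sig P w = (cj c) • (sig P v₁ - v₁) := by
      rw [hw, sig_smul, sig_add, sig_sig h2]
      funext i
      simp only [Pi.smul_apply, Pi.add_apply, Pi.sub_apply, neg_smul, Pi.neg_apply,
        smul_eq_mul, one_smul]
      ring
    have hnew1 : w ⬝ᵥ w = 1 := by
      have expand : w ⬝ᵥ w = c*c*(2+2*γ) := by
        rw [hw]
        rw [smul_add c v₁ (sig P v₁), dot_expand, d11, d12, d21, d22]
        ring
      rw [expand, show c*c = c^2 by ring, hc, inv_mul_cancel₀ hβ]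
    have hnew2 : w ⬝ᵥ sig P w = 0 := by
      rw [hsw, hw]
      rw [smul_add c v₁ (sig P v₁)]
      have hrw : (cj c) • (sig P v₁ - v₁) = (- cj c) • v₁ + (cj c) • sig P v₁ := by
        funext i; simp only [Pi.smul_apply, Pi.sub_apply, Pi.add_apply, neg_smul,
          Pi.neg_apply, smul_eq_mul]; ring
      rw [hrw, dot_expand, d11, d12, d21, d22]
      ring
    -- orthogonality of w and sig w to old vectors
    have hperpw : ∀ i, u i ⬝ᵥ w = 0 := by
      intro i
      rw [hw]
      rw [smul_add c v₁ (sig P v₁), dotProduct_add, dotProduct_smul, dotProduct_smul,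
        hv2 i, hv3 i]
      simp
    have hperpsw : ∀ i, u i ⬝ᵥ sig P w = 0 := by
      intro i
      rw [hsw]
      have : (cj c) • (sig P v₁ - v₁) = (- cj c) • v₁ + (cj c) • sig P v₁ := by
        funext i; simp only [Pi.smul_apply, Pi.sub_apply, Pi.add_apply, neg_smul,
          Pi.neg_apply, smul_eq_mul]; ring
      rw [this, dotProduct_add, dotProduct_smul, dotProduct_smul,
        hv2 i, hv3 i]
      simp
    refine ⟨Fin.snoc v w, ?_, ?_⟩
    · intro i j
      refine Fin.lastCases ?_ (fun i' => ?_) i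
      · refine Fin.lastCases ?_ (fun j' => ?_) j
        · simp [Fin.snoc_last, hnew1]
        · have hne : Fin.last k ≠ j'.castSucc := (Fin.castSucc_lt_last j').ne'
          rw [Fin.snoc_last, Fin.snoc_castSucc, dotProduct_comm]
          rw [show v j' ⬝ᵥ w = 0 from hperpw (Sum.inl j')]
          simp [hne]
      · refine Fin.lastCases ?_ (fun j' => ?_) j
        · have hne : i'.castSucc ≠ Fin.last k := (Fin.castSucc_lt_last i').ne
          rw [Fin.snoc_last, Fin.snoc_castSucc]
          rw [show v i' ⬝ᵥ w = 0 from hperpw (Sum.inl i')]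
          simp [hne]
        · rw [Fin.snoc_castSucc, Fin.snoc_castSucc, hvv i' j']
          simp [Fin.castSucc_inj]
    · intro i j
      refine Fin.lastCases ?_ (fun i' => ?_) i
      · refine Fin.lastCases ?_ (fun j' => ?_) j
        · try simp only [Fin.snoc_last, Fin.snoc_castSucc]
          exact hnew2
        · try simp only [Fin.snoc_last, Fin.snoc_castSucc]
          rw [dotProduct_comm]
          exact hperpw (Sum.inr j')
      · refine Fin.lastCases ?_ (fun j' => ?_) j
        · try simp only [Fin.snoc_last, Fin.snoc_castSucc]
          exact hperpsw (Sum.inl i')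
        · try simp only [Fin.snoc_last, Fin.snoc_castSucc]
          exact hvs i' j'


/-- matrix with columns `u j` -/
def colsMat (u : ι → ι → ℂ) : Matrix ι ι ℂ := Matrix.of fun i j => u j i

lemma colsMat_orth (u : ι → ι → ℂ) (hu : ∀ i j, u i ⬝ᵥ u j = if i = j then 1 else 0) :
    (colsMat u)ᵀ * colsMat u = 1 := by
  ext i j
  simp only [Matrix.mul_apply, Matrix.transpose_apply, colsMat, Matrix.of_apply]
  rw [show ∑ l, u i l * u j l = u i ⬝ᵥ u j from rfl, hu i j, Matrix.one_apply]

lemma colsMat_mulVec_col (P : Matrix ι ι ℂ) (u : ι → ι → ℂ) (i j : ι) :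
    (P * colsMat u) i j = (P *ᵥ u j) i := by
  simp [Matrix.mul_apply, colsMat, Matrix.mulVec, dotProduct]

/-- conjugate relation for the real-type family -/
lemma conjU_real {P : Matrix ι ι ℂ} (u : ι → ι → ℂ) (s : ι → ℂ)
    (hs : ∀ i, s i = 1 ∨ s i = -1)
    (hsig : ∀ i, sig P (u i) = s i • u i) :
    (colsMat u).map cj = P * colsMat u * Matrix.diagonal s := by
  ext i j
  rw [Matrix.mul_diagonal, colsMat_mulVec_col]
  have hcs : cj (s j) = s j := by rcases hs j with h | h <;> rw [h] <;> simp
  have hss : s j * s j = 1 := by rcases hs j with h | h <;> rw [h] <;> norm_num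
  have := congrFun (hsig j) i
  simp only [sig, Pi.star_apply, Pi.smul_apply, smul_eq_mul] at this
  -- this : star ((P *ᵥ u j) i) = s j * u j i
  have h2 : (P *ᵥ u j) i = cj (s j * u j i) := by
    rw [← this]; simp
  rw [h2]
  simp only [Matrix.map_apply, colsMat, Matrix.of_apply, _root_.map_mul, hcs]
  rw [show s j * cj (u j i) * s j = (s j * s j) * cj (u j i) by ring, hss, one_mul]

/-- conjugate relation for the quaternionic-type family -/
lemma conjU_quat {n : ℕ} {P : Matrix (Fin n ⊕ Fin n) (Fin n ⊕ Fin n) ℂ}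
    (h2 : (P.map cj) * P = (-1 : ℂ) • 1)
    (v : Fin n → (Fin n ⊕ Fin n) → ℂ) :
    (colsMat (Sum.elim v (fun a => sig P (v a)))).map cj
      = P * colsMat (Sum.elim v (fun a => sig P (v a))) * Jmat n := by
  have hmv : ∀ y : (Fin n ⊕ Fin n) → ℂ, P *ᵥ star y = star ((P.map cj) *ᵥ y) := by
    intro y
    funext i
    simp only [Matrix.mulVec, dotProduct, Pi.star_apply, Matrix.map_apply]
    rw [star_sum]
    congr 1; funext j; simp
  have hsigsig : ∀ x : (Fin n ⊕ Fin n) → ℂ, sig P (sig P x) = (-1 : ℂ) • x := by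
    intro x
    unfold sig
    rw [hmv, star_star, Matrix.mulVec_mulVec, h2]
    funext i
    simp [Matrix.smul_mulVec, Matrix.neg_mulVec, Matrix.one_mulVec]
  have hUJ : colsMat (Sum.elim v (fun a => sig P (v a))) * Jmat n
      = colsMat (Sum.elim (fun a => -(sig P (v a))) v) := by
    ext i j
    simp only [Matrix.mul_apply, colsMat, Matrix.of_apply, Jmat]
    cases j with
    | inl b =>
      rw [Fintype.sum_sum_type]
      simp [Matrix.fromBlocks_apply₁₁, Matrix.fromBlocks_apply₂₁, Matrix.one_apply,
        Finset.sum_ite_eq']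
    | inr b =>
      rw [Fintype.sum_sum_type]
      simp [Matrix.fromBlocks_apply₁₂, Matrix.fromBlocks_apply₂₂, Matrix.one_apply,
        Finset.sum_ite_eq']
  rw [Matrix.mul_assoc, hUJ]
  ext i j
  rw [colsMat_mulVec_col]
  cases j with
  | inl b =>
    have h3 := congrFun (hsigsig (v b)) i
    simp only [sig, Pi.star_apply, Pi.smul_apply, smul_eq_mul] at h3
    simp only [Sum.elim_inl, Matrix.map_apply, colsMat, Matrix.of_apply]
    have h4 : (P *ᵥ (-(sig P (v b)))) i = -((P *ᵥ (sig P (v b))) i) := by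
      rw [Matrix.mulVec_neg]; rfl
    rw [h4]
    have h5 : (P *ᵥ sig P (v b)) i = star ((-1 : ℂ) * v b i) := by
      rw [← h3]; simp [sig]
    rw [h5]
    simp
  | inr b =>
    simp only [Sum.elim_inr, Matrix.map_apply, colsMat, Matrix.of_apply, sig,
      Pi.star_apply, RCLike.star_def, Complex.conj_conj]

/-- flip one column to change the sign of the determinant -/
def flipMat (i₀ : ι) : Matrix ι ι ℂ := Matrix.diagonal (fun i => if i = i₀ then -1 else 1)

lemma flipMat_sq (i₀ : ι) : flipMat i₀ * flipMat i₀ = 1 := by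
  unfold flipMat
  rw [Matrix.diagonal_mul_diagonal]
  convert Matrix.diagonal_one
  rename_i i
  by_cases h : i = i₀ <;> simp [h]

lemma flipMat_det (i₀ : ι) : (flipMat i₀).det = -1 := by
  unfold flipMat
  rw [Matrix.det_diagonal]
  rw [Finset.prod_ite_eq' Finset.univ i₀ (fun _ => (-1 : ℂ))]
  simp

lemma flipMat_transpose (i₀ : ι) : (flipMat i₀)ᵀ = flipMat i₀ := Matrix.diagonal_transpose _

lemma flipMat_map_cj (i₀ : ι) : (flipMat i₀).map cj = flipMat i₀ := by
  ext i j
  unfold flipMat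
  by_cases h : i = j
  · subst h; by_cases h2 : i = i₀ <;> simp [Matrix.diagonal_apply, h2]
  · simp [Matrix.diagonal_apply, h]

/-- the sorting permutation -/
lemma sort_perm {N : ℕ} (s : Fin N → ℂ) (hs : ∀ k, s k = 1 ∨ s k = -1) :
    ∃ (p : ℕ) (τ : Equiv.Perm (Fin N)), p ≤ N ∧
      ∀ k : Fin N, (s (τ k) = 1 ↔ (k : ℕ) < p) := by
  classical
  set p := Fintype.card {k : Fin N // s k = 1} with hp
  have hpN : p ≤ N := by
    rw [hp]
    calc Fintype.card {k : Fin N // s k = 1} ≤ Fintype.card (Fin N) :=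
          Fintype.card_subtype_le _
      _ = N := Fintype.card_fin N
  have hcardlt : Fintype.card {k : Fin N // (k : ℕ) < p} = p := by
    have e : {k : Fin N // (k : ℕ) < p} ≃ Fin p :=
      { toFun := fun k => ⟨(k : Fin N), k.2⟩
        invFun := fun j => ⟨⟨(j : ℕ), lt_of_lt_of_le j.isLt hpN⟩, j.isLt⟩
        left_inv := fun k => by ext; rfl
        right_inv := fun j => by ext; rfl }
    rw [Fintype.card_congr e, Fintype.card_fin]
  have eqA : {k : Fin N // (k : ℕ) < p} ≃ {k : Fin N // s k = 1} :=
    Fintype.equivOfCardEq (by rw [hcardlt])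
  have eqB : {k : Fin N // ¬((k : ℕ) < p)} ≃ {k : Fin N // ¬(s k = 1)} :=
    Fintype.equivOfCardEq (by
      rw [Fintype.card_subtype_compl, Fintype.card_subtype_compl, hcardlt])
  set τ : Equiv.Perm (Fin N) :=
    ((Equiv.sumCompl (fun k : Fin N => (k : ℕ) < p)).symm.trans
      ((Equiv.sumCongr eqA eqB).trans (Equiv.sumCompl (fun k : Fin N => s k = 1)))) with hτ
  refine ⟨p, τ, hpN, fun k => ?_⟩
  by_cases h : (k : ℕ) < p
  · have h1 : (Equiv.sumCompl (fun k : Fin N => (k : ℕ) < p)).symm k = Sum.inl ⟨k, h⟩ :=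
      Equiv.sumCompl_symm_apply_of_pos (p := fun k : Fin N => (k : ℕ) < p) h
    have : τ k = (eqA ⟨k, h⟩ : Fin N) := by
      rw [hτ]
      simp [h1]
    rw [this]
    exact ⟨fun _ => h, fun _ => (eqA ⟨k, h⟩).2⟩
  · have h1 : (Equiv.sumCompl (fun k : Fin N => (k : ℕ) < p)).symm k = Sum.inr ⟨k, h⟩ :=
      Equiv.sumCompl_symm_apply_of_neg (p := fun k : Fin N => (k : ℕ) < p) h
    have : τ k = (eqB ⟨k, h⟩ : Fin N) := by
      rw [hτ]
      simp [h1]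
    rw [this]
    constructor
    · intro hcon; exact absurd hcon (eqB ⟨k, h⟩).2
    · intro hcon; exact absurd hcon h

lemma Jmat_transpose (n : ℕ) : (Jmat n)ᵀ = -(Jmat n) := by
  unfold Jmat
  rw [Matrix.fromBlocks_transpose]
  simp [Matrix.fromBlocks_neg]

lemma Jmat_mul_Jmat (n : ℕ) : Jmat n * Jmat n = -1 := by
  unfold Jmat
  rw [Matrix.fromBlocks_multiply]
  simp [← Matrix.fromBlocks_one, Matrix.fromBlocks_neg]


end Stmt12Aux
open Stmt12Aux in
theorem stmt12 {Γ : Type*} [Group Γ] {n : ℕ} (hn : 0 < n)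
    (ρ : Γ →* Matrix.GeneralLinearGroup (Fin n ⊕ Fin n) ℂ)
    (ho : ∀ γ : Γ, IsOrthoC (ρ γ : Matrix (Fin n ⊕ Fin n) (Fin n ⊕ Fin n) ℂ))
    (hdet : ∀ γ : Γ, (ρ γ : Matrix (Fin n ⊕ Fin n) (Fin n ⊕ Fin n) ℂ).det = 1)
    (hirr : MatIrreducible ρ)
    (P : Matrix (Fin n ⊕ Fin n) (Fin n ⊕ Fin n) ℂ) (hP : IsUnit P)
    (hconj : ∀ γ : Γ, P * (ρ γ : Matrix (Fin n ⊕ Fin n) (Fin n ⊕ Fin n) ℂ) * P⁻¹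
        = (ρ γ : Matrix (Fin n ⊕ Fin n) (Fin n ⊕ Fin n) ℂ).map (starRingEnd ℂ))
    (P₀ : Matrix (Fin n ⊕ Fin n) (Fin n ⊕ Fin n) ℂ) (hP₀ : IsOrthoC P₀)
    (hP₀det : P₀.det = -1) :
    ∃ Q : Matrix (Fin n ⊕ Fin n) (Fin n ⊕ Fin n) ℂ, IsOrthoC Q ∧ Q.det = 1 ∧
      ((∃ p q : ℕ, p + q = 2 * n ∧ ∀ γ : Γ,
          ((DpqS n p)⁻¹ * Q * (ρ γ : Matrix (Fin n ⊕ Fin n) (Fin n ⊕ Fin n) ℂ) * Q⁻¹ *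
              DpqS n p).map (starRingEnd ℂ)
            = (DpqS n p)⁻¹ * Q * (ρ γ : Matrix (Fin n ⊕ Fin n) (Fin n ⊕ Fin n) ℂ) * Q⁻¹ *
              DpqS n p) ∨
       (∀ γ : Γ,
          (Q * (ρ γ : Matrix (Fin n ⊕ Fin n) (Fin n ⊕ Fin n) ℂ) * Q⁻¹) * Jmat n
            = Jmat n *
              (Q * (ρ γ : Matrix (Fin n ⊕ Fin n) (Fin n ⊕ Fin n) ℂ) * Q⁻¹).map (starRingEnd ℂ)) ∨
       (∀ γ : Γ,
          (P₀⁻¹ * Q * (ρ γ : Matrix (Fin n ⊕ Fin n) (Fin n ⊕ Fin n) ℂ) * Q⁻¹ * P₀) * Jmat n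
            = Jmat n *
              (P₀⁻¹ * Q * (ρ γ : Matrix (Fin n ⊕ Fin n) (Fin n ⊕ Fin n) ℂ) * Q⁻¹ *
                P₀).map (starRingEnd ℂ))) := by
  classical
  have hnem : Nonempty (Fin n ⊕ Fin n) := ⟨Sum.inl ⟨0, hn⟩⟩
  set cjm : Matrix (Fin n ⊕ Fin n) (Fin n ⊕ Fin n) ℂ → Matrix (Fin n ⊕ Fin n) (Fin n ⊕ Fin n) ℂ :=
    fun M => M.map (starRingEnd ℂ) with hcjm
  -- basic facts about P
  have hPdet : IsUnit P.det := (Matrix.isUnit_iff_isUnit_det P).mp hP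
  have hPinv : P⁻¹ * P = 1 := Matrix.nonsing_inv_mul P hPdet
  have hconj' : ∀ γ : Γ, P * (ρ γ : Matrix (Fin n ⊕ Fin n) (Fin n ⊕ Fin n) ℂ)
      = (ρ γ : Matrix (Fin n ⊕ Fin n) (Fin n ⊕ Fin n) ℂ).map (starRingEnd ℂ) * P := by
    intro γ
    calc P * (ρ γ : Matrix (Fin n ⊕ Fin n) (Fin n ⊕ Fin n) ℂ)
        = P * (ρ γ : Matrix (Fin n ⊕ Fin n) (Fin n ⊕ Fin n) ℂ) * (P⁻¹ * P) := by
          rw [hPinv, mul_one]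
      _ = (P * (ρ γ : Matrix (Fin n ⊕ Fin n) (Fin n ⊕ Fin n) ℂ) * P⁻¹) * P := by
          rw [← Matrix.mul_assoc]
      _ = (ρ γ : Matrix (Fin n ⊕ Fin n) (Fin n ⊕ Fin n) ℂ).map (starRingEnd ℂ) * P := by
          rw [hconj γ]
  obtain ⟨P₁, ε, hεor, h1, h1', h2, h2', hconj₁⟩ :=
    normalizeP ρ (fun γ => ho γ) hirr P hP hconj'
  have hcρ : ∀ γ : Γ, (ρ γ : Matrix (Fin n ⊕ Fin n) (Fin n ⊕ Fin n) ℂ).map (starRingEnd ℂ)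
      = P₁ * (ρ γ : Matrix (Fin n ⊕ Fin n) (Fin n ⊕ Fin n) ℂ) * P₁ᵀ := by
    intro γ
    calc (ρ γ : Matrix (Fin n ⊕ Fin n) (Fin n ⊕ Fin n) ℂ).map (starRingEnd ℂ)
        = (ρ γ : Matrix (Fin n ⊕ Fin n) (Fin n ⊕ Fin n) ℂ).map (starRingEnd ℂ) * (P₁ * P₁ᵀ) := by
          rw [h1', mul_one]
      _ = ((ρ γ : Matrix (Fin n ⊕ Fin n) (Fin n ⊕ Fin n) ℂ).map (starRingEnd ℂ) * P₁) * P₁ᵀ := by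
          rw [mul_assoc]
      _ = (P₁ * (ρ γ : Matrix (Fin n ⊕ Fin n) (Fin n ⊕ Fin n) ℂ)) * P₁ᵀ := by
          rw [hconj₁ γ]
  have hcan : ∀ X : Matrix (Fin n ⊕ Fin n) (Fin n ⊕ Fin n) ℂ, X * P₁ᵀ * P₁ = X := by
    intro X
    rw [mul_assoc, h1, mul_one]
  have hP₀' : P₀ * P₀ᵀ = 1 := mul_eq_one_comm.mp hP₀
  have hP₀inv : P₀⁻¹ = P₀ᵀ := Matrix.inv_eq_right_inv hP₀'
  have det_pm : ∀ U : Matrix (Fin n ⊕ Fin n) (Fin n ⊕ Fin n) ℂ,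
      Uᵀ * U = 1 → U.det = 1 ∨ U.det = -1 := by
    intro U h
    apply mul_self_eq_one_iff.mp
    calc U.det * U.det = Uᵀ.det * U.det := by rw [Matrix.det_transpose]
      _ = (Uᵀ * U).det := (Matrix.det_mul _ _).symm
      _ = 1 := by rw [h, Matrix.det_one]
  rcases hεor with hε1 | hεm1
  · -- ========== real case ==========
    rw [hε1] at h2
    obtain ⟨u, s, hu, hs, hsig⟩ := build_real h1 h2 (n + n)
      (by simp [Fintype.card_sum, Fintype.card_fin])
    obtain ⟨p, τ, hpN, hτ⟩ := sort_perm s hs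
    set u' : (Fin n ⊕ Fin n) → (Fin n ⊕ Fin n) → ℂ :=
      fun i => u (τ (finSumFinEquiv i)) with hu'def
    set s' : (Fin n ⊕ Fin n) → ℂ := fun i => s (τ (finSumFinEquiv i)) with hs'def
    have hsumIdx : ∀ i : Fin n ⊕ Fin n, ((finSumFinEquiv i : Fin (n+n)) : ℕ) = sumIdx i := by
      intro i; cases i <;> simp [sumIdx] <;> omega
    have hs'val : ∀ i : Fin n ⊕ Fin n, s' i = if sumIdx i < p then 1 else -1 := by
      intro i
      by_cases h : sumIdx i < p
      · have : s (τ (finSumFinEquiv i)) = 1 := (hτ _).mpr (by rw [hsumIdx]; exact h)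
        simp only [hs'def, this]
        rw [if_pos h]
      · have hne : ¬ s (τ (finSumFinEquiv i)) = 1 := by
          intro hcon
          exact h (by rw [← hsumIdx i]; exact (hτ _).mp hcon)
        rcases hs (τ (finSumFinEquiv i)) with hh | hh
        · exact absurd hh hne
        · simp only [hs'def, hh]
          rw [if_neg h]
    have hu' : ∀ i j, u' i ⬝ᵥ u' j = if i = j then 1 else 0 := by
      intro i j
      rw [hu'def]
      simp only []
      rw [hu]
      by_cases h : i = j
      · simp [h]
      · have hne : ¬ (τ (finSumFinEquiv i) = τ (finSumFinEquiv j)) := by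
          intro hcon
          exact h (finSumFinEquiv.injective (τ.injective hcon))
        rw [if_neg hne, if_neg h]
    have hsig' : ∀ i, sig P₁ (u' i) = s' i • u' i := fun i => hsig _
    have hs' : ∀ i, s' i = 1 ∨ s' i = -1 := fun i => hs _
    set U₀ : Matrix (Fin n ⊕ Fin n) (Fin n ⊕ Fin n) ℂ := colsMat u' with hU₀def
    have hU₀o : U₀ᵀ * U₀ = 1 := colsMat_orth u' hu'
    set E : Matrix (Fin n ⊕ Fin n) (Fin n ⊕ Fin n) ℂ :=
      Matrix.diagonal (fun i => if sumIdx i < p then (1:ℂ) else -1) with hEdef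
    have hU₀c : U₀.map (starRingEnd ℂ) = P₁ * U₀ * E := by
      have := conjU_real u' s' hs' hsig'
      rw [show Matrix.diagonal s' = E by
        rw [hEdef]; exact congrArg Matrix.diagonal (funext hs'val)] at this
      exact this
    obtain ⟨U, hUo, hUc, hUdet⟩ : ∃ U : Matrix (Fin n ⊕ Fin n) (Fin n ⊕ Fin n) ℂ,
        Uᵀ * U = 1 ∧ U.map (starRingEnd ℂ) = P₁ * U * E ∧ U.det = 1 := by
      rcases det_pm U₀ hU₀o with h | h
      · exact ⟨U₀, hU₀o, hU₀c, h⟩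
      · set i₀ : Fin n ⊕ Fin n := Sum.inl ⟨0, hn⟩
        set F : Matrix (Fin n ⊕ Fin n) (Fin n ⊕ Fin n) ℂ := flipMat i₀ with hFdef
        have hEF : E * F = F * E := by
          rw [hEdef, hFdef]
          unfold flipMat
          rw [Matrix.diagonal_mul_diagonal, Matrix.diagonal_mul_diagonal]
          exact congrArg Matrix.diagonal (funext fun i => mul_comm _ _)
        refine ⟨U₀ * F, ?_, ?_, ?_⟩
        · calc (U₀ * F)ᵀ * (U₀ * F) = Fᵀ * U₀ᵀ * (U₀ * F) := by rw [Matrix.transpose_mul]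
            _ = Fᵀ * (U₀ᵀ * U₀) * F := by rw [mul_assoc, mul_assoc, mul_assoc]
            _ = Fᵀ * F := by rw [hU₀o, mul_one]
            _ = 1 := by rw [flipMat_transpose, flipMat_sq]
        · calc (U₀ * F).map (starRingEnd ℂ)
              = U₀.map (starRingEnd ℂ) * F.map (starRingEnd ℂ) := Matrix.map_mul
            _ = (P₁ * U₀ * E) * F := by rw [hU₀c, flipMat_map_cj]
            _ = P₁ * U₀ * (E * F) := by rw [mul_assoc]
            _ = P₁ * U₀ * (F * E) := by rw [hEF]
            _ = P₁ * (U₀ * F) * E := by rw [← mul_assoc, ← mul_assoc]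
        · rw [Matrix.det_mul, h, flipMat_det]; norm_num
    have hUU : U * Uᵀ = 1 := mul_eq_one_comm.mp hUo
    refine ⟨Uᵀ, ?_, ?_, Or.inl ⟨p, 2*n - p, by omega, fun γ => ?_⟩⟩
    · show (Uᵀ)ᵀ * Uᵀ = 1
      rw [Matrix.transpose_transpose]
      exact hUU
    · rw [Matrix.det_transpose]; exact hUdet
    · -- the big computation
      have hQinv : (Uᵀ)⁻¹ = U := Matrix.inv_eq_right_inv hUo
      set d : (Fin n ⊕ Fin n) → ℂ := fun i => if sumIdx i < p then 1 else Complex.I with hd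
      set dinv : (Fin n ⊕ Fin n) → ℂ := fun i => if sumIdx i < p then 1 else -Complex.I
        with hdinv
      have hDinv : (DpqS n p)⁻¹ = Matrix.diagonal dinv := by
        apply Matrix.inv_eq_right_inv
        rw [show DpqS n p = Matrix.diagonal d from rfl, Matrix.diagonal_mul_diagonal]
        rw [show (fun i => d i * dinv i) = fun _ => (1:ℂ) from funext fun i => by
          by_cases h : sumIdx i < p <;> simp [hd, hdinv, h, mul_neg, Complex.I_mul_I]]
        exact Matrix.diagonal_one
      have hdiagmap : ∀ f : (Fin n ⊕ Fin n) → ℂ,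
          (Matrix.diagonal f).map (starRingEnd ℂ)
            = Matrix.diagonal (fun i => starRingEnd ℂ (f i)) := by
        intro f
        rw [Matrix.diagonal_map (by simp)]
      have hDcE : (Matrix.diagonal dinv).map (starRingEnd ℂ) * E = Matrix.diagonal dinv := by
        rw [hdiagmap, hEdef, Matrix.diagonal_mul_diagonal]
        refine congrArg Matrix.diagonal (funext fun i => ?_)
        by_cases h : sumIdx i < p <;> simp [hdinv, h]
      have hEDc : E * (DpqS n p).map (starRingEnd ℂ) = DpqS n p := by
        rw [show DpqS n p = Matrix.diagonal d from rfl, hdiagmap, hEdef,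
          Matrix.diagonal_mul_diagonal]
        refine congrArg Matrix.diagonal (funext fun i => ?_)
        by_cases h : sumIdx i < p <;> simp [hd, h]
      have hQc : (Uᵀ).map (starRingEnd ℂ) = E * Uᵀ * P₁ᵀ := by
        rw [Matrix.transpose_map, hUc, Matrix.transpose_mul, Matrix.transpose_mul]
        rw [show Eᵀ = E from Matrix.diagonal_transpose _, ← Matrix.mul_assoc]
      rw [hQinv, hDinv]
      simp only [hcjm, Matrix.map_mul]
      rw [hQc, hcρ γ, hUc]
      simp only [← Matrix.mul_assoc]
      rw [hcan ((Matrix.diagonal dinv).map (starRingEnd ℂ) * E * Uᵀ)]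
      rw [hcan ((Matrix.diagonal dinv).map (starRingEnd ℂ) * E * Uᵀ *
        (ρ γ : Matrix (Fin n ⊕ Fin n) (Fin n ⊕ Fin n) ℂ))]
      rw [hDcE]
      rw [Matrix.mul_assoc (Matrix.diagonal dinv * Uᵀ *
        (ρ γ : Matrix (Fin n ⊕ Fin n) (Fin n ⊕ Fin n) ℂ) * U) E, hEDc]
  · -- ========== quaternionic case ==========
    rw [hεm1] at h2
    obtain ⟨v, hvv, hvs⟩ := build_quat h1 h2 n
      (by simp [Fintype.card_sum, Fintype.card_fin]; omega)
    set uq : (Fin n ⊕ Fin n) → (Fin n ⊕ Fin n) → ℂ :=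
      Sum.elim v (fun a => sig P₁ (v a)) with huqdef
    have hsvv : ∀ i j, sig P₁ (v i) ⬝ᵥ sig P₁ (v j) = if i = j then 1 else 0 := by
      intro i j
      rw [sig_dot_sig h1, hvv]
      by_cases h : i = j <;> simp [h]
    have hsvv2 : ∀ i j, sig P₁ (v i) ⬝ᵥ v j = 0 := by
      intro i j
      rw [dotProduct_comm]; exact hvs j i
    have huq : ∀ i j, uq i ⬝ᵥ uq j = if i = j then 1 else 0 := by
      intro i j
      cases i with
      | inl i' => cases j with
        | inl j' => rw [huqdef]; simp only [Sum.elim_inl]; rw [hvv]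
                    by_cases h : i' = j' <;> simp [h]
        | inr j' => rw [huqdef]; simp only [Sum.elim_inl, Sum.elim_inr]; rw [hvs]; simp
      | inr i' => cases j with
        | inl j' => rw [huqdef]; simp only [Sum.elim_inl, Sum.elim_inr]; rw [hsvv2]; simp
        | inr j' => rw [huqdef]; simp only [Sum.elim_inr]; rw [hsvv]
                    by_cases h : i' = j' <;> simp [h]
    set U : Matrix (Fin n ⊕ Fin n) (Fin n ⊕ Fin n) ℂ := colsMat uq with hUdef
    have hUo : Uᵀ * U = 1 := colsMat_orth uq huq
    have hUU : U * Uᵀ = 1 := mul_eq_one_comm.mp hUo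
    have hUc : U.map (starRingEnd ℂ) = P₁ * U * Jmat n := conjU_quat h2 v
    have hQinv : (Uᵀ)⁻¹ = U := Matrix.inv_eq_right_inv hUo
    have hJJT : Jmat n * (Jmat n)ᵀ = 1 := by
      rw [Jmat_transpose, mul_neg, Jmat_mul_Jmat, neg_neg]
    -- the middle identity
    have hmid : ∀ γ : Γ, (Uᵀ * (ρ γ : Matrix (Fin n ⊕ Fin n) (Fin n ⊕ Fin n) ℂ) * U) * Jmat n
        = Jmat n * ((Uᵀ * (ρ γ : Matrix (Fin n ⊕ Fin n) (Fin n ⊕ Fin n) ℂ) * U).map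
            (starRingEnd ℂ)) := by
      intro γ
      have hQc : (Uᵀ).map (starRingEnd ℂ) = (Jmat n)ᵀ * Uᵀ * P₁ᵀ := by
        rw [Matrix.transpose_map, hUc, Matrix.transpose_mul, Matrix.transpose_mul]
        rw [← Matrix.mul_assoc]
      simp only [Matrix.map_mul]
      rw [hQc, hcρ γ, hUc]
      simp only [← Matrix.mul_assoc]
      rw [hJJT, one_mul]
      rw [hcan (Uᵀ), hcan (Uᵀ * (ρ γ : Matrix (Fin n ⊕ Fin n) (Fin n ⊕ Fin n) ℂ))]
    rcases det_pm U hUo with hdU | hdU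
    · -- det Uᵀ = 1, second disjunct
      refine ⟨Uᵀ, ?_, ?_, Or.inr (Or.inl fun γ => ?_)⟩
      · show (Uᵀ)ᵀ * Uᵀ = 1
        rw [Matrix.transpose_transpose]; exact hUU
      · rw [Matrix.det_transpose]; exact hdU
      · rw [hQinv]
        exact hmid γ
    · -- det Uᵀ = -1, third disjunct
      refine ⟨P₀ * Uᵀ, ?_, ?_, Or.inr (Or.inr fun γ => ?_)⟩
      · show (P₀ * Uᵀ)ᵀ * (P₀ * Uᵀ) = 1
        calc (P₀ * Uᵀ)ᵀ * (P₀ * Uᵀ) = U * P₀ᵀ * (P₀ * Uᵀ) := by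
              rw [Matrix.transpose_mul, Matrix.transpose_transpose]
          _ = U * (P₀ᵀ * P₀) * Uᵀ := by rw [mul_assoc, mul_assoc, mul_assoc]
          _ = U * Uᵀ := by rw [hP₀, mul_one]
          _ = 1 := hUU
      · rw [Matrix.det_mul, hP₀det, Matrix.det_transpose, hdU]; norm_num
      · have hQexinv : (P₀ * Uᵀ)⁻¹ = U * P₀ᵀ := by
          apply Matrix.inv_eq_right_inv
          calc (P₀ * Uᵀ) * (U * P₀ᵀ) = P₀ * (Uᵀ * U) * P₀ᵀ := by
                rw [mul_assoc, mul_assoc, mul_assoc]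
            _ = P₀ * P₀ᵀ := by rw [hUo, mul_one]
            _ = 1 := hP₀'
        rw [hQexinv, hP₀inv]
        have hred : P₀ᵀ * (P₀ * Uᵀ) * (ρ γ : Matrix (Fin n ⊕ Fin n) (Fin n ⊕ Fin n) ℂ) *
            (U * P₀ᵀ) * P₀ = Uᵀ * (ρ γ : Matrix (Fin n ⊕ Fin n) (Fin n ⊕ Fin n) ℂ) * U := by
          simp only [← Matrix.mul_assoc]
          rw [show P₀ᵀ * P₀ = 1 from hP₀, one_mul]
          rw [show Uᵀ * (ρ γ : Matrix (Fin n ⊕ Fin n) (Fin n ⊕ Fin n) ℂ) * U * P₀ᵀ * P₀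
            = Uᵀ * (ρ γ : Matrix (Fin n ⊕ Fin n) (Fin n ⊕ Fin n) ℂ) * U * (P₀ᵀ * P₀) from by
              rw [Matrix.mul_assoc (Uᵀ * (ρ γ : Matrix (Fin n ⊕ Fin n) (Fin n ⊕ Fin n) ℂ) * U)]]
          rw [show P₀ᵀ * P₀ = 1 from hP₀, mul_one]
        rw [hred]
        exact hmid γ
end
end
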